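/- arXiv:1412.1739 — 13 statements merged into one kernel-verified Lean document; each statement's English description precedes it below -/
import Mathlib

section
/- Let N be a zero-symmetric near-ring with identity satisfying the DCCN. Then an element n : N is a unit if and only if the right translation map ψ_n : N → N, m ↦ m*n, is injective. -/
/-!
If `m ↦ m * n` is injective, the images of its iterates form a descending chain of
`N`-subgroups (associativity makes right translation commute with left multiplication), so by
the DCCN the chain stabilises, and injectivity then forces right translation to be surjective.
A preimage `w` of `1` is a left inverse, and it is a right inverse because
`(n * w) * n = n = 1 * n`.
-/

theorem AddMonoid.End.antitone_range_pow {G : Type*} [AddGroup G] (φ : AddMonoid.End G) :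
    Antitone fun i : ℕ => AddMonoidHom.range (φ ^ i) :=
  antitone_nat_of_succ_le fun i _ ⟨y, hy⟩ => ⟨φ y, by rw [← hy, pow_succ]; rfl⟩

section NearRing

variable {N : Type*} [AddGroup N] [Mul N]

theorem AddMonoid.End.pow_apply_mul {φ : AddMonoid.End N} (hφ : ∀ a x : N, φ (a * x) = a * φ x)
    (i : ℕ) (a x : N) : (φ ^ i) (a * x) = a * (φ ^ i) x := by
  induction i generalizing x with
  | zero => rfl
  | succ i ih =>
    rw [pow_succ]
    change (φ ^ i) (φ (a * x)) = a * (φ ^ i) (φ x)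
    rw [hφ, ih]

theorem AddMonoid.End.surjective_of_injective_of_dccn
    (hdcc : ∀ f : ℕ → AddSubgroup N, Antitone f →
      (∀ i : ℕ, ∀ n : N, ∀ m ∈ f i, n * m ∈ f i) →
      ∃ k : ℕ, ∀ j ≥ k, f j = f k)
    {φ : AddMonoid.End N} (hφ : ∀ a x : N, φ (a * x) = a * φ x)
    (hinj : Function.Injective φ) : Function.Surjective φ := by
  obtain ⟨k, hk⟩ := hdcc _ φ.antitone_range_pow fun i a m ⟨y, hy⟩ =>
    ⟨a * y, by rw [← hy]; exact pow_apply_mul hφ i a y⟩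
  intro x
  obtain ⟨y, hy⟩ : (φ ^ k) x ∈ AddMonoidHom.range (φ ^ (k + 1)) := by
    rw [hk (k + 1) k.le_succ]
    exact ⟨x, rfl⟩
  have hinj_pow : Function.Injective ⇑(φ ^ k) := by
    rw [AddMonoid.End.coe_pow]
    exact hinj.iterate k
  exact ⟨y, hinj_pow (by rw [← hy, pow_succ]; rfl)⟩

end NearRing

theorem stmt1_general {N : Type*} [AddGroup N] [Mul N] [One N]
    (hassoc : ∀ a b c : N, (a * b) * c = a * (b * c))
    (hdist : ∀ a b c : N, (a + b) * c = a * c + b * c)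
    (honel : ∀ a : N, 1 * a = a) (honer : ∀ a : N, a * 1 = a)
    (hdcc : ∀ f : ℕ → AddSubgroup N, Antitone f →
      (∀ i : ℕ, ∀ n : N, ∀ m ∈ f i, n * m ∈ f i) →
      ∃ k : ℕ, ∀ j ≥ k, f j = f k)
    (n : N) :
    (∃ v : N, n * v = 1 ∧ v * n = 1) ↔ Function.Injective (fun m : N => m * n) := by
  constructor
  · rintro ⟨v, hnv, -⟩ a b hab
    calc a = (a * n) * v := by rw [hassoc, hnv, honer]
      _ = (b * n) * v := congrArg (· * v) hab
      _ = b := by rw [hassoc, hnv, honer]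
  · intro hinj
    let ψ : AddMonoid.End N := AddMonoidHom.mk' (· * n) fun a b => hdist a b n
    obtain ⟨w, hwn⟩ : ∃ w, w * n = 1 :=
      AddMonoid.End.surjective_of_injective_of_dccn hdcc (φ := ψ) (fun a x => hassoc a x n) hinj 1
    refine ⟨w, hinj ?_, hwn⟩
    change (n * w) * n = 1 * n
    rw [hassoc, hwn, honer, honel]

/-- In a zero-symmetric near-ring with identity satisfying the DCCN,
an element is a unit iff its right translation map is injective. -/
theorem stmt1 {N : Type*} [AddGroup N] [Mul N] [One N]
    (hassoc : ∀ a b c : N, (a * b) * c = a * (b * c))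
    (hdist : ∀ a b c : N, (a + b) * c = a * c + b * c)
    (honel : ∀ a : N, 1 * a = a) (honer : ∀ a : N, a * 1 = a)
    (hzero : ∀ a : N, a * 0 = 0)
    (hdcc : ∀ f : ℕ → AddSubgroup N, Antitone f →
      (∀ i : ℕ, ∀ n : N, ∀ m ∈ f i, n * m ∈ f i) →
      ∃ k : ℕ, ∀ j ≥ k, f j = f k)
    (n : N) :
    (∃ v : N, n * v = 1 ∧ v * n = 1) ↔ Function.Injective (fun m : N => m * n) :=
  stmt1_general hassoc hdist honel honer hdcc n
end

section
/- Let R be a ring with identity that is left-Artinian and has at least two units. Then the following are equivalent: (i) every nonzero element of R is invertible; (ii) for all units a, b of R with a ≠ b, the element a − b is a unit; (iii) for every unit u of R with u ≠ 1 and every r : R, r*u = r implies r = 0. -/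
section Aux

variable {R : Type*} [Ring R]

/-- Under condition (iii), square-zero elements vanish. -/
lemma aux_sq (h3 : ∀ u : R, IsUnit u → u ≠ 1 → ∀ r : R, r * u = r → r = 0)
    (a : R) (ha : a * a = 0) : a = 0 := by
  by_contra hne
  have hu : IsUnit (1 + a) := by
    refine isUnit_iff_exists.2 ⟨1 - a, ?_, ?_⟩
    · have : (1 + a) * (1 - a) = 1 + (a - a) - a * a := by noncomm_ring
      rw [this, ha, sub_self, add_zero, sub_zero]
    · have : (1 - a) * (1 + a) = 1 + (a - a) - a * a := by noncomm_ring
      rw [this, ha, sub_self, add_zero, sub_zero]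
  have h1 : (1 : R) + a ≠ 1 := fun h => hne (add_eq_left.mp h)
  have hfix : a * (1 + a) = a := by rw [mul_add, mul_one, ha, add_zero]
  exact hne (h3 _ hu h1 a hfix)

/-- A unit of the form `1 + n` with `n * n = 0`. -/
lemma aux_unit_sq (n : R) (hn : n * n = 0) : IsUnit (1 + n) := by
  refine isUnit_iff_exists.2 ⟨1 - n, ?_, ?_⟩
  · have : (1 + n) * (1 - n) = 1 + (n - n) - n * n := by noncomm_ring
    rw [this, hn, sub_self, add_zero, sub_zero]
  · have : (1 - n) * (1 + n) = 1 + (n - n) - n * n := by noncomm_ring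
    rw [this, hn, sub_self, add_zero, sub_zero]

/-- Under condition (iii) plus the existence of two distinct units,
idempotents are trivial. -/
lemma aux_idem (hU : ∃ a b : R, IsUnit a ∧ IsUnit b ∧ a ≠ b)
    (h3 : ∀ u : R, IsUnit u → u ≠ 1 → ∀ r : R, r * u = r → r = 0)
    (e : R) (he : e * e = e) : e = 0 ∨ e = 1 := by
  set f : R := 1 - e with hf
  have hef : e * f = 0 := by rw [hf, mul_sub, mul_one, he, sub_self]
  have hfe : f * e = 0 := by rw [hf, sub_mul, one_mul, he, sub_self]
  have hff : f * f = f := by rw [hf, sub_mul, one_mul, mul_sub, mul_one, he]; abel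
  have hone : e + f = 1 := by rw [hf]; abel
  by_cases h1 : ∀ t : R, f * t * e = 0
  · by_cases h2 : ∀ t : R, e * t * f = 0
    · -- e is central
      have hcen : ∀ t : R, e * t = t * e := by
        intro t
        have h4 : e * t = e * t * e := by
          calc e * t = e * t * (e + f) := by rw [hone, mul_one]
            _ = e * t * e + e * t * f := by rw [mul_add]
            _ = e * t * e := by rw [h2 t, add_zero]
        have h5 : t * e = e * t * e := by
          calc t * e = (e + f) * t * e := by rw [hone, one_mul]
            _ = e * t * e + f * t * e := by rw [add_mul, add_mul]
            _ = e * t * e := by rw [h1 t, add_zero]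
        rw [h4, h5]
      have hcenf : ∀ t : R, f * t = t * f := by
        intro t
        rw [hf, sub_mul, one_mul, mul_sub, mul_one, hcen t]
      by_contra hcon
      push_neg at hcon
      obtain ⟨he0, he1⟩ := hcon
      have hfne : f ≠ 0 := fun h => he1 (sub_eq_zero.mp h).symm
      obtain ⟨a, b, ha, hb, hab⟩ := hU
      obtain ⟨a', haa', ha'a⟩ := isUnit_iff_exists.mp ha
      set u : R := a' * b with hu
      have huu : IsUnit u := (isUnit_iff_exists.2 ⟨a, ha'a, haa'⟩).mul hb
      have hune : u ≠ 1 := by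
        intro h
        have : a * (a' * b) = a * 1 := by rw [← hu, h]
        rw [← mul_assoc, haa', one_mul, mul_one] at this
        exact hab this.symm
      obtain ⟨u', huu', hu'u⟩ := isUnit_iff_exists.mp huu
      -- key multiplication identities
      have key1 : ∀ c d : R, c * d = 1 → (e * c + f) * (e * d + f) = 1 := by
        intro c d hcd
        have hexp : (e * c + f) * (e * d + f)
            = e * c * (e * d) + e * (c * f) + f * e * d + f * f := by noncomm_ring
        have t1 : e * c * (e * d) = e := by
          rw [show e * c * (e * d) = e * (c * e) * d by noncomm_ring, ← hcen c,
            show e * (e * c) * d = e * e * (c * d) by noncomm_ring, he, hcd, mul_one]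
        have t2 : e * (c * f) = 0 := by
          rw [← hcenf c, ← mul_assoc, hef, zero_mul]
        rw [hexp, t1, t2, hfe, zero_mul, hff, add_zero, add_zero, hone]
      have key2 : ∀ c d : R, c * d = 1 → (e + f * c) * (e + f * d) = 1 := by
        intro c d hcd
        have hexp : (e + f * c) * (e + f * d)
            = e * e + e * (f * d) + f * c * e + f * c * (f * d) := by noncomm_ring
        have t1 : f * c * (f * d) = f := by
          rw [show f * c * (f * d) = f * (c * f) * d by noncomm_ring, ← hcenf c,
            show f * (f * c) * d = f * f * (c * d) by noncomm_ring, hff, hcd, mul_one]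
        have t2 : e * (f * d) = 0 := by rw [← mul_assoc, hef, zero_mul]
        have t3 : f * c * e = 0 := by
          rw [mul_assoc, ← hcen c, ← mul_assoc, hfe, zero_mul]
        rw [hexp, t1, t2, t3, he, add_zero, add_zero, hone]
      -- v1 = e*u + f is a unit fixing f
      have hv1 : IsUnit (e * u + f) :=
        isUnit_iff_exists.2 ⟨e * u' + f, key1 u u' huu', key1 u' u hu'u⟩
      have hfix1 : f * (e * u + f) = f := by
        rw [mul_add, ← mul_assoc, hfe, zero_mul, zero_add, hff]
      have hv1eq : e * u + f = 1 := by
        by_contra hne1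
        exact hfne (h3 _ hv1 hne1 f hfix1)
      -- v2 = e + f*u is a unit fixing e
      have hv2 : IsUnit (e + f * u) :=
        isUnit_iff_exists.2 ⟨e + f * u', key2 u u' huu', key2 u' u hu'u⟩
      have hfix2 : e * (e + f * u) = e := by
        rw [mul_add, he, ← mul_assoc, hef, zero_mul, add_zero]
      have hv2eq : e + f * u = 1 := by
        by_contra hne1
        exact he0 (h3 _ hv2 hne1 e hfix2)
      -- combine
      apply hune
      have heu : e * u = e := by
        have : e * u + f = e + f := by rw [hv1eq, hone]
        exact add_right_cancel this
      have hfu2 : f * u = f := by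
        have : e + f * u = e + f := by rw [hv2eq, hone]
        exact add_left_cancel this
      calc u = (e + f) * u := by rw [hone, one_mul]
        _ = e * u + f * u := by rw [add_mul]
        _ = 1 := by rw [heu, hfu2, hone]
    · push_neg at h2
      obtain ⟨t, ht⟩ := h2
      have hsq : (e * t * f) * (e * t * f) = 0 := by
        rw [show (e * t * f) * (e * t * f) = e * t * (f * e) * t * f by noncomm_ring,
          hfe, mul_zero, zero_mul, zero_mul]
      have hu : IsUnit (1 + e * t * f) := aux_unit_sq _ hsq
      have hune : (1 : R) + e * t * f ≠ 1 := fun h => ht (add_eq_left.mp h)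
      have hfix : f * (1 + e * t * f) = f := by
        rw [mul_add, mul_one, ← mul_assoc, ← mul_assoc, hfe, zero_mul, zero_mul,
          add_zero]
      have hf0 : f = 0 := h3 _ hu hune f hfix
      exact Or.inr (sub_eq_zero.mp hf0).symm
  · push_neg at h1
    obtain ⟨t, ht⟩ := h1
    have hsq : (f * t * e) * (f * t * e) = 0 := by
      rw [show (f * t * e) * (f * t * e) = f * t * (e * f) * t * e by noncomm_ring,
        hef, mul_zero, zero_mul, zero_mul]
    have hu : IsUnit (1 + f * t * e) := aux_unit_sq _ hsq
    have hune : (1 : R) + f * t * e ≠ 1 := fun h => ht (add_eq_left.mp h)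
    have hfix : e * (1 + f * t * e) = e := by
      rw [mul_add, mul_one, ← mul_assoc, ← mul_assoc, hef, zero_mul, zero_mul,
        add_zero]
    exact Or.inl (h3 _ hu hune e hfix)

end Aux

/-- For a left-Artinian ring with at least two units, the following
are equivalent: every nonzero element is invertible; differences of distinct
units are units; units act fixed-point-freely by right multiplication. -/
theorem stmt2 {R : Type*} [Ring R] [IsArtinianRing R]
    (hU : ∃ a b : R, IsUnit a ∧ IsUnit b ∧ a ≠ b) :
    List.TFAE [
      ∀ r : R, r ≠ 0 → IsUnit r,
      ∀ a b : R, IsUnit a → IsUnit b → a ≠ b → IsUnit (a - b),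
      ∀ u : R, IsUnit u → u ≠ 1 → ∀ r : R, r * u = r → r = 0] := by
  have nt : Nontrivial R := by
    obtain ⟨a, b, _, _, hab⟩ := hU
    exact ⟨a, b, hab⟩
  tfae_have 1 → 2 := by
    intro h1 a b ha hb hab
    exact h1 _ (sub_ne_zero_of_ne hab)
  tfae_have 2 → 3 := by
    intro h2 u hu hune r hr
    have hum : IsUnit (u - 1) := h2 u 1 hu isUnit_one hune
    obtain ⟨c, hc, hc'⟩ := isUnit_iff_exists.mp hum
    have h0 : r * (u - 1) = 0 := by rw [mul_sub, mul_one, hr, sub_self]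
    calc r = r * ((u - 1) * c) := by rw [hc, mul_one]
      _ = r * (u - 1) * c := by rw [mul_assoc]
      _ = 0 := by rw [h0, zero_mul]
  tfae_have 3 → 1 := by
    intro h3
    -- every nonzero left ideal is ⊤
    have key : ∀ I : Submodule R R, I ≠ ⊥ → I = ⊤ := by
      intro I hI
      obtain ⟨A, hAS, hAmin⟩ := IsArtinian.set_has_minimal
        {J : Submodule R R | J ≠ ⊥} ⟨⊤, top_ne_bot⟩
      have hAtop : A = ⊤ := by
        -- products in A are not all zero
        have hprod : ∃ a ∈ A, ∃ b ∈ A, b * a ≠ 0 := by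
          by_contra hcon
          push_neg at hcon
          apply hAS
          rw [Submodule.eq_bot_iff]
          intro x hx
          exact aux_sq h3 x (hcon x hx x hx)
        obtain ⟨a, haA, b, hbA, hba⟩ := hprod
        have hane : a ≠ 0 := by rintro rfl; exact hba (mul_zero b)
        set φ : R →ₗ[R] R := LinearMap.toSpanSingleton R R a with hφ
        have hφ_apply : ∀ z : R, φ z = z * a := fun z => rfl
        have hB : A ⊓ LinearMap.ker φ = ⊥ := by
          by_contra hBne
          refine hAmin _ hBne (lt_of_le_of_ne inf_le_left ?_)
          intro hEq
          have : b ∈ A ⊓ LinearMap.ker φ := hEq.symm ▸ hbA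
          exact hba (by simpa [hφ_apply] using this.2)
        have hCle : Submodule.map φ A ≤ A := by
          rintro x ⟨z, hz, rfl⟩
          exact A.smul_mem z haA
        have hCne : Submodule.map φ A ≠ ⊥ := by
          intro hEq
          apply hba
          have : φ b ∈ Submodule.map φ A := ⟨b, hbA, rfl⟩
          rw [hEq] at this
          simpa [hφ_apply] using this
        have hCA : Submodule.map φ A = A := by
          by_contra hne
          exact hAmin _ hCne (lt_of_le_of_ne hCle hne)
        have haC : a ∈ Submodule.map φ A := hCA.symm ▸ haA
        obtain ⟨e, heA, hea⟩ := haC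
        rw [hφ_apply] at hea
        have hee : e * e = e := by
          have hmem : e * e - e ∈ A ⊓ LinearMap.ker φ := by
            constructor
            · exact A.sub_mem (A.smul_mem e heA) heA
            · have : (e * e - e) * a = 0 := by
                rw [sub_mul, mul_assoc, hea, hea, sub_self]
              simpa [LinearMap.mem_ker, hφ_apply] using this
          rw [hB] at hmem
          exact sub_eq_zero.mp (Submodule.mem_bot (R := R) |>.mp hmem)
        have hene : e ≠ 0 := by
          rintro rfl
          rw [zero_mul] at hea
          exact hane hea.symm
        have he1 : e = 1 := (aux_idem hU h3 e hee).resolve_left hene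
        rw [Submodule.eq_top_iff']
        intro x
        have : x • e ∈ A := A.smul_mem x heA
        simpa [he1] using this
      by_contra hItop
      exact hAmin I hI (hAtop ▸ lt_of_le_of_ne le_top hItop)
    intro x hx
    have hspan : Submodule.span R {x} = ⊤ := by
      apply key
      intro hEq
      have hxm : x ∈ Submodule.span R {x} := Submodule.mem_span_singleton_self x
      rw [hEq, Submodule.mem_bot] at hxm
      exact hx hxm
    have h1 : (1 : R) ∈ Submodule.span R {x} := hspan ▸ Submodule.mem_top
    obtain ⟨y, hy⟩ := Submodule.mem_span_singleton.mp h1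
    have hyx : y * x = 1 := hy
    have hxy : x * y = 1 := by
      have hee : (x * y) * (x * y) = x * y := by
        rw [mul_assoc, ← mul_assoc y, hyx, one_mul]
      rcases aux_idem hU h3 (x * y) hee with h | h
      · exfalso
        apply hx
        calc x = x * (y * x) := by rw [hyx, mul_one]
          _ = (x * y) * x := by rw [mul_assoc]
          _ = 0 := by rw [h, zero_mul]
      · exact h
    exact isUnit_iff_exists.2 ⟨y, hxy, hyx⟩
  tfae_finish
end

section
/- Let R be a left-Artinian ring with identity such that for every unit u ≠ 1 and every r : R, r*u = r implies r = 0. Then for any two units a, b of R with a ≠ b, the element a − b is a unit. -/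
/-- If in a left-Artinian ring the units act fixed-point-freely by
right multiplication, then the difference of any two distinct units is a unit. -/
theorem stmt4 {R : Type*} [Ring R] [IsArtinianRing R]
    (hf : ∀ u : R, IsUnit u → u ≠ 1 → ∀ r : R, r * u = r → r = 0) :
    ∀ a b : R, IsUnit a → IsUnit b → a ≠ b → IsUnit (a - b) := by
  have key : ∀ x : R, (∀ r : R, r * x = 0 → r = 0) → IsUnit x := by
    intro x hx
    set f : R →ₗ[R] R := LinearMap.toSpanSingleton R R x with hfdef
    have hinj : Function.Injective f := by
      intro p q h
      have h' : (p - q) * x = 0 := by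
        have : p * x = q * x := by
          simpa [hfdef, LinearMap.toSpanSingleton_apply, smul_eq_mul] using h
        rw [sub_mul, this, sub_self]
      have := hx _ h'
      exact sub_eq_zero.mp this
    have hsurj := IsArtinian.surjective_of_injective_endomorphism f hinj
    obtain ⟨r, hr⟩ := hsurj 1
    have hr' : r * x = 1 := by
      simpa [hfdef, LinearMap.toSpanSingleton_apply, smul_eq_mul] using hr
    have hxr : x * r = 1 := by
      have h0 : (x * r - 1) * x = 0 := by
        rw [sub_mul, one_mul, mul_assoc, hr', mul_one, sub_self]
      have := hx _ h0
      exact sub_eq_zero.mp this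
    exact isUnit_iff_exists.mpr ⟨r, hxr, hr'⟩
  intro a b ha hb hab
  obtain ⟨v, rfl⟩ := hb
  set u : R := a * ↑v⁻¹ with hu
  have hun : IsUnit u := ha.mul (v⁻¹).isUnit
  have hune : u ≠ 1 := by
    intro h
    apply hab
    have := congrArg (· * (v : R)) h
    simpa [hu, mul_assoc] using this
  have hx : ∀ r : R, r * (u - 1) = 0 → r = 0 := by
    intro r hr
    apply hf u hun hune
    have : r * u - r = 0 := by simpa [mul_sub] using hr
    exact sub_eq_zero.mp this
  have hu1 : IsUnit (u - 1) := key _ hx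
  have : a - ↑v = (u - 1) * ↑v := by
    simp [hu, sub_mul, mul_assoc]
  rw [this]
  exact hu1.mul v.isUnit
end

section
/- Let R be a ring with identity in which a − b is a unit for all units a, b with a ≠ b. Then R is reduced: R has no nonzero nilpotent elements (IsReduced R). -/
/-- A ring in which the difference of any two distinct units is a
unit is reduced. -/
theorem stmt5 {R : Type*} [Ring R]
    (ha : ∀ a b : R, IsUnit a → IsUnit b → a ≠ b → IsUnit (a - b)) :
    IsReduced R := by
  constructor
  intro a h
  by_contra hne
  have h1 : IsUnit (1 + a) := h.isUnit_one_add
  have hne1 : (1 : R) + a ≠ 1 := fun hEq => hne (add_eq_left.mp hEq)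
  have hu := ha (1 + a) 1 h1 isUnit_one hne1
  rw [add_sub_cancel_left] at hu
  obtain ⟨n, hn⟩ := h
  have h0 : IsUnit ((0 : R)) := hn ▸ hu.pow n
  have : Subsingleton R := subsingleton_of_zero_eq_one (isUnit_zero_iff.mp h0)
  exact hne (Subsingleton.elim _ _)
end

section
/- Let R be a left-Artinian ring with identity whose only unit is 1 (every invertible element of R equals 1). Then there exist k : ℕ and a ring isomorphism R ≃+* (Fin k → ZMod 2), i.e. R is isomorphic to a finite direct product of copies of the field ℤ₂. -/
/-!
Since `1 + x` is a unit for every `x` in the Jacobson radical, a ring whose only unit is `1` has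
zero Jacobson radical; being Artinian, it is therefore semisimple, and by Wedderburn–Artin it is a
finite product of matrix rings `Mₙ(D)` over division rings. Each factor again has only the unit
`1`. This forces `n = 1`, since an off-diagonal matrix unit is nilpotent and `1 + nilpotent` is a
unit, and it forces `D = 𝔽₂`, since every nonzero element of `D` is a unit.
-/

theorem Ring.isUnit_add_one_of_mem_jacobson {R : Type*} [Ring R] {x : R}
    (hx : x ∈ Ring.jacobson R) : IsUnit (x + 1) := by
  rw [← Ideal.jacobson_bot] at hx
  obtain ⟨s, hs⟩ := Ideal.exists_mul_add_sub_mem_of_mem_jacobson x hx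
  rw [Ideal.mem_bot, sub_eq_zero] at hs
  -- `s = -(s * x) + 1` has a left inverse as well, which must then be `x + 1`.
  have hs' : -(s * x) + 1 = s := by
    calc -(s * x) + 1 = -(s * x) + s * (x + 1) := by rw [hs]
      _ = s := by noncomm_ring
  have hsx : -(s * x) ∈ (⊥ : Ideal R).jacobson := neg_mem (Ideal.mul_mem_left _ s hx)
  obtain ⟨t, ht⟩ := Ideal.exists_mul_add_sub_mem_of_mem_jacobson _ hsx
  rw [Ideal.mem_bot, sub_eq_zero, hs'] at ht
  have htx : t = x + 1 := by
    calc t = t * (s * (x + 1)) := by rw [hs, mul_one]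
      _ = x + 1 := by rw [← mul_assoc, ht, one_mul]
  exact ⟨⟨x + 1, s, htx ▸ ht, hs⟩, rfl⟩

theorem Ring.jacobson_eq_bot_of_subsingleton_units (R : Type*) [Ring R] [Subsingleton Rˣ] :
    Ring.jacobson R = ⊥ :=
  eq_bot_iff.mpr fun _ hx ↦ by simpa using (Ring.isUnit_add_one_of_mem_jacobson hx).eq_one

theorem IsNilpotent.eq_zero_of_subsingleton_units {R : Type*} [Ring R] [Subsingleton Rˣ] {x : R}
    (hx : IsNilpotent x) : x = 0 := by
  simpa using hx.isUnit_one_add.eq_one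

theorem Pi.subsingleton_units_of_subsingleton_units_pi {ι : Type*} [DecidableEq ι]
    {M : ι → Type*} [∀ i, Monoid (M i)] [Subsingleton (∀ i, M i)ˣ] (i : ι) :
    Subsingleton (M i)ˣ :=
  (Units.map_injective (f := MonoidHom.mulSingle M i) (Pi.mulSingle_injective i)).subsingleton

theorem DivisionRing.nonempty_ringEquiv_zmod_two (D : Type*) [DivisionRing D]
    [Subsingleton Dˣ] : Nonempty (D ≃+* ZMod 2) := by
  have h01 (x : D) : x = 0 ∨ x = 1 := or_iff_not_imp_left.mpr fun hx ↦ (Ne.isUnit hx).eq_one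
  have h2 : (2 : D) = 0 := by
    calc (2 : D) = 1 - -1 := by norm_num
      _ = 0 := by rw [isUnit_one.neg.eq_one, sub_self]
  have : CharP D 2 := CharTwo.of_one_ne_zero_of_two_eq_zero one_ne_zero h2
  refine ⟨(RingEquiv.ofBijective (ZMod.castHom dvd_rfl D)
    ⟨(ZMod.castHom _ D).injective, fun x ↦ ?_⟩).symm⟩
  rcases h01 x with rfl | rfl
  exacts [⟨0, map_zero _⟩, ⟨1, map_one _⟩]

namespace Matrix

variable {n : Type*} [Fintype n] [DecidableEq n] {D : Type*}

theorem subsingleton_units_of_subsingleton_units [Nonempty n] [Ring D]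
    [Subsingleton (Matrix n n D)ˣ] : Subsingleton Dˣ :=
  (Units.map_injective (f := (scalar n : D →+* Matrix n n D).toMonoidHom)
    fun _ _ ↦ scalar_inj.mp).subsingleton

theorem subsingleton_of_subsingleton_units [Ring D] [Nontrivial D]
    [Subsingleton (Matrix n n D)ˣ] : Subsingleton n := by
  refine ⟨fun i j ↦ by_contra fun hij ↦ one_ne_zero (α := D) ?_⟩
  have : IsNilpotent (single i j (1 : D)) := ⟨2, by simp [sq, Ne.symm hij]⟩
  simpa using congrFun (congrFun this.eq_zero_of_subsingleton_units i) j

theorem nonempty_ringEquiv_zmod_two_of_subsingleton_units [Nonempty n] [DivisionRing D]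
    [Subsingleton (Matrix n n D)ˣ] : Nonempty (Matrix n n D ≃+* ZMod 2) := by
  have := subsingleton_units_of_subsingleton_units (n := n) (D := D)
  have := subsingleton_of_subsingleton_units (n := n) (D := D)
  let : Unique n := uniqueOfSubsingleton (Classical.arbitrary n)
  -- `uniqueRingEquiv` multiplies matrices using the `Fintype` instance derived from `Unique`.
  obtain rfl : ‹Fintype n› = Unique.fintype := Subsingleton.elim _ _
  exact ⟨uniqueRingEquiv.trans (DivisionRing.nonempty_ringEquiv_zmod_two D).some⟩

end Matrix

/-- A left-Artinian ring whose only unit is `1` is isomorphic to a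
finite direct product of copies of `ℤ₂`. -/
theorem stmt6 {R : Type*} [Ring R] [IsArtinianRing R]
    (hu : ∀ u : R, IsUnit u → u = 1) :
    ∃ k : ℕ, Nonempty (R ≃+* (Fin k → ZMod 2)) := by
  have := Subsingleton.units_of_isUnit hu
  have : IsSemisimpleRing R := IsArtinianRing.isSemisimpleRing_iff_jacobson.mpr
    (Ring.jacobson_eq_bot_of_subsingleton_units R)
  obtain ⟨k, D, d, _, _, ⟨e⟩⟩ := IsSemisimpleRing.exists_ringEquiv_pi_matrix_divisionRing R
  have := (Units.mapEquiv e.symm.toMulEquiv).toEquiv.subsingleton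
  have hfactor (i : Fin k) : Nonempty (Matrix (Fin (d i)) (Fin (d i)) (D i) ≃+* ZMod 2) :=
    have := Pi.subsingleton_units_of_subsingleton_units_pi
      (M := fun i ↦ Matrix (Fin (d i)) (Fin (d i)) (D i)) i
    Matrix.nonempty_ringEquiv_zmod_two_of_subsingleton_units
  exact ⟨k, ⟨e.trans (RingEquiv.piCongrRight fun i ↦ (hfactor i).some)⟩⟩
end

section
/- Let (M,+) be an additive group, not necessarily commutative. Let S be a set of additive endomorphisms of M closed under composition and containing the zero endomorphism. Let G ⊆ S satisfy: the identity map lies in G; every element of G is bijective; G is closed under composition; the functional inverse of each element of G again lies in G; every g ∈ G with g ≠ id has no nonzero fixed point (g(x) = x implies x = 0); and every element of S \ G is not bijective. Let m : M be such that for every n : M there is exactly one s ∈ S with s(m) = n; write s_n for this unique element. Define a multiplication on M by a*b := s_b(a). Then: (1) * is associative; (2) * is right distributive over +, i.e. (a+b)*c = a*c + b*c; (3) m is a two-sided identity for *; (4) a*0 = 0 and 0*a = 0 for all a; (5) an element u : M is a unit of (M,*) (there exists v with u*v = m and v*u = m) if and only if u = g(m) for some g ∈ G; and (6) for every unit u with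 u ≠ m and every n : M, n*u = n implies n = 0. In other words, (M,+,*) is an f-near-ring with identity m. -/
/-- Construction of f-near-rings from a semigroup of group
endomorphisms `S = G ∪ E` where `G` is a group of fixed-point-free automorphisms,
together with an element `m` such that every `n` is `s(m)` for a unique `s ∈ S`.
The multiplication is `a * b := s_b(a)`, encoded via the selection map `sel`. -/
theorem stmt7 {M : Type*} [AddGroup M]
    (S G : Set (M → M))
    (hSadd : ∀ s ∈ S, ∀ x y : M, s (x + y) = s x + s y)
    (hScomp : ∀ s ∈ S, ∀ t ∈ S, s ∘ t ∈ S)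
    (hS0 : (fun _ : M => (0 : M)) ∈ S)
    (hGS : G ⊆ S)
    (hGid : id ∈ G)
    (hGbij : ∀ g ∈ G, Function.Bijective g)
    (hGcomp : ∀ g ∈ G, ∀ h ∈ G, g ∘ h ∈ G)
    (hGinv : ∀ g ∈ G, ∃ g' ∈ G, g ∘ g' = id ∧ g' ∘ g = id)
    (hGfpf : ∀ g ∈ G, g ≠ id → ∀ x : M, g x = x → x = 0)
    (hSG : ∀ s ∈ S, s ∉ G → ¬ Function.Bijective s)
    (m : M) (sel : M → (M → M))
    (hselS : ∀ n : M, sel n ∈ S)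
    (hselm : ∀ n : M, sel n m = n)
    (huniq : ∀ n : M, ∀ s ∈ S, s m = n → s = sel n) :
    -- with multiplication a * b := sel b a :
    (∀ a b c : M, sel c (sel b a) = sel (sel c b) a) ∧           -- (1) associativity
    (∀ a b c : M, sel c (a + b) = sel c a + sel c b) ∧           -- (2) right distributivity
    (∀ a : M, sel a m = a ∧ sel m a = a) ∧                        -- (3) m is a two-sided identity
    (∀ a : M, sel (0 : M) a = 0 ∧ sel a 0 = 0) ∧                  -- (4) a*0 = 0 and 0*a = 0
    (∀ u : M, (∃ v : M, sel v u = m ∧ sel u v = m) ↔ ∃ g ∈ G, g m = u) ∧  -- (5) units = G(m)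
    (∀ u : M, (∃ v : M, sel v u = m ∧ sel u v = m) → u ≠ m →
      ∀ n : M, sel u n = n → n = 0) := by                          -- (6) units act fpf
  -- key lemma: sel c ∘ sel b = sel (sel c b)
  have hcomp : ∀ b c : M, sel c ∘ sel b = sel (sel c b) := by
    intro b c
    apply huniq
    · exact hScomp _ (hselS c) _ (hselS b)
    · simp [Function.comp, hselm]
  have hselm_id : sel m = id := by
    have := huniq m id (hGS hGid) rfl
    exact this.symm
  have hsel0 : sel (0 : M) = fun _ => 0 := by
    have := huniq 0 _ hS0 rfl
    exact this.symm
  have hselz : ∀ a : M, sel a 0 = 0 := by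
    intro a
    have h := hSadd (sel a) (hselS a) 0 0
    simp at h
    exact h
  -- units direction
  have hunit : ∀ u : M, (∃ v : M, sel v u = m ∧ sel u v = m) → sel u ∈ G := by
    intro u ⟨v, hvu, huv⟩
    by_contra hG
    apply hSG _ (hselS u) hG
    have h1 : sel v ∘ sel u = id := by
      rw [hcomp, hvu, hselm_id]
    have h2 : sel u ∘ sel v = id := by
      rw [hcomp, huv, hselm_id]
    exact Function.bijective_iff_has_inverse.mpr
      ⟨sel v, congrFun h1, congrFun h2⟩
  refine ⟨?_, ?_, ?_, ?_, ?_, ?_⟩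
  · intro a b c
    exact congrFun (hcomp b c) a
  · intro a b c
    exact hSadd _ (hselS c) a b
  · intro a
    exact ⟨hselm a, by rw [hselm_id]; rfl⟩
  · intro a
    exact ⟨by rw [hsel0], hselz a⟩
  · intro u
    constructor
    · intro h
      exact ⟨sel u, hunit u h, hselm u⟩
    · rintro ⟨g, hg, rfl⟩
      obtain ⟨g', hg', hgg', hg'g⟩ := hGinv g hg
      have hsg : sel (g m) = g := (huniq _ g (hGS hg) rfl).symm
      have hsg' : sel (g' m) = g' := (huniq _ g' (hGS hg') rfl).symm
      exact ⟨g' m, by rw [hsg', ← Function.comp_apply (f := g') (g := g), hg'g]; rfl,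
        by rw [hsg, ← Function.comp_apply (f := g) (g := g'), hgg']; rfl⟩
  · intro u hu hum n hn
    have hG := hunit u hu
    have hne : sel u ≠ id := by
      intro h
      apply hum
      have := hselm u
      rw [h] at this
      exact this.symm
    exact hGfpf _ hG hne n hn
end

section
/- Let (M,+) be an additive group, not necessarily commutative. Let S be a set of additive endomorphisms of M closed under composition and containing the zero endomorphism. Let G ⊆ S satisfy: the identity map lies in G; every element of G is bijective; G is closed under composition; the functional inverse of each element of G again lies in G; and every element of S \ G is not bijective. Let H be an additive subgroup of M and m : M be such that {g(m) | g ∈ G} = H \ {0} and for every n : M there is exactly one s ∈ S with s(m) = n; write s_n for this unique element. Define a multiplication on M by a*b := s_b(a). Then: (1) * is associative; (2) * is right distributive over +; (3) m is a two-sided identity for *; (4) a*0 = 0 and 0*a = 0 for all a; (5) the units of (M,*) are exactly the elements of H \ {0}; and (6) for any two units a, b with a ≠ b, the element a − b is a unit. In other words, (M,+,*) is an a-near-ring with identity m. -/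
/-- Construction of a-near-rings from a semigroup of group
endomorphisms `S = G ∪ E`, an additive subgroup `H` and an element `m` with
`G(m) = H \ {0}`, such that every `n` is `s(m)` for a unique `s ∈ S`.
The multiplication is `a * b := s_b(a)`, encoded via the selection map `sel`. -/
theorem stmt8 {M : Type*} [AddGroup M]
    (S G : Set (M → M))
    (hSadd : ∀ s ∈ S, ∀ x y : M, s (x + y) = s x + s y)
    (hScomp : ∀ s ∈ S, ∀ t ∈ S, s ∘ t ∈ S)
    (hS0 : (fun _ : M => (0 : M)) ∈ S)
    (hGS : G ⊆ S)
    (hGid : id ∈ G)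
    (hGbij : ∀ g ∈ G, Function.Bijective g)
    (hGcomp : ∀ g ∈ G, ∀ h ∈ G, g ∘ h ∈ G)
    (hGinv : ∀ g ∈ G, ∃ g' ∈ G, g ∘ g' = id ∧ g' ∘ g = id)
    (hSG : ∀ s ∈ S, s ∉ G → ¬ Function.Bijective s)
    (H : AddSubgroup M) (m : M)
    (hGm : {x : M | ∃ g ∈ G, g m = x} = (H : Set M) \ {0})
    (sel : M → (M → M))
    (hselS : ∀ n : M, sel n ∈ S)
    (hselm : ∀ n : M, sel n m = n)
    (huniq : ∀ n : M, ∀ s ∈ S, s m = n → s = sel n) :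
    -- with multiplication a * b := sel b a :
    (∀ a b c : M, sel c (sel b a) = sel (sel c b) a) ∧           -- (1) associativity
    (∀ a b c : M, sel c (a + b) = sel c a + sel c b) ∧           -- (2) right distributivity
    (∀ a : M, sel a m = a ∧ sel m a = a) ∧                        -- (3) m is a two-sided identity
    (∀ a : M, sel (0 : M) a = 0 ∧ sel a 0 = 0) ∧                  -- (4) a*0 = 0 and 0*a = 0
    (∀ u : M, (∃ v : M, sel v u = m ∧ sel u v = m) ↔ (u ∈ H ∧ u ≠ 0)) ∧ -- (5) units = H \ {0}
    (∀ a b : M, (∃ v : M, sel v a = m ∧ sel a v = m) →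
      (∃ v : M, sel v b = m ∧ sel b v = m) → a ≠ b →
      ∃ v : M, sel v (a - b) = m ∧ sel (a - b) v = m) := by        -- (6) units additively closed

  have selcomp : ∀ b c : M, (sel c ∘ sel b) = sel (sel c b) := by
    intro b c
    exact huniq _ _ (hScomp _ (hselS c) _ (hselS b)) (by simp [hselm])
  have selm : sel m = id := (huniq m id (hGS hGid) (by simp)).symm
  have sel0 : sel (0:M) = fun _ => 0 := (huniq 0 _ hS0 rfl).symm
  have unit_iff : ∀ u : M, (∃ v, sel v u = m ∧ sel u v = m) ↔ (u ∈ H ∧ u ≠ 0) := by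
    intro u
    constructor
    · rintro ⟨v, hv1, hv2⟩
      have h1 : sel u ∘ sel v = id := by rw [selcomp, hv2, selm]
      have h2 : sel v ∘ sel u = id := by rw [selcomp, hv1, selm]
      have hbij : Function.Bijective (sel u) :=
        Function.bijective_iff_has_inverse.2
          ⟨sel v, fun x => congrFun h2 x, fun x => congrFun h1 x⟩
      have hG : sel u ∈ G := by
        by_contra h
        exact hSG _ (hselS u) h hbij
      have hu : u ∈ {x : M | ∃ g ∈ G, g m = x} := ⟨sel u, hG, hselm u⟩
      rw [hGm] at hu
      exact ⟨hu.1, hu.2⟩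
    · rintro ⟨hu1, hu2⟩
      have hu : u ∈ (H : Set M) \ {0} := ⟨hu1, hu2⟩
      rw [← hGm] at hu
      obtain ⟨g, hg, hgm⟩ := hu
      have hgsel : g = sel u := huniq u g (hGS hg) hgm
      obtain ⟨g', hg', hgg', hg'g⟩ := hGinv g hg
      have hg'sel : sel (g' m) = g' := (huniq _ g' (hGS hg') rfl).symm
      refine ⟨g' m, ?_, ?_⟩
      · rw [hg'sel, ← hgm, ← Function.comp_apply (f := g') (g := g), hg'g]; rfl
      · rw [← hgsel, ← Function.comp_apply (f := g) (g := g'), hgg']; rfl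
  refine ⟨?_, ?_, ?_, ?_, unit_iff, ?_⟩
  · intro a b c; rw [← selcomp]; rfl
  · intro a b c; exact hSadd _ (hselS c) a b
  · intro a; exact ⟨hselm a, by rw [selm]; rfl⟩
  · intro a
    refine ⟨by rw [sel0], ?_⟩
    have h := hSadd _ (hselS a) 0 0
    simp only [add_zero] at h
    exact (left_eq_add.mp h)
  · intro a b ha hb hab
    rw [unit_iff] at ha hb ⊢
    exact ⟨H.sub_mem ha.1 hb.1, sub_ne_zero.2 hab⟩
end

section
/- Let F be a near-field, encoded as a type F with [AddGroup F], a multiplication, a zero and a one satisfying: associativity of multiplication; right distributivity (a+b)*c = a*c + b*c; a*0 = 0 and 0*a = 0; 1*a = a and a*1 = a; 1 ≠ 0; and every a ≠ 0 has a two-sided multiplicative inverse. Let k ≥ 1 be a natural number and for each i : Fin k let α_i : F → F be a bijection with α_i(0) = 0 and α_i(a*b) = α_i(a)*α_i(b) for all a, b, such that α_{k-1} = id. On V := Fin k → F, with pointwise addition, define x *₁ a as follows: if a j = 0 for all j ≠ k−1, then (x *₁ a) i := x i * α_i(a (k−1)); otherwise (x *₁ a) i := x (k−1) * a i. Let e :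 V be given by e (k−1) = 1 and e i = 0 for i ≠ k−1. Then: (1) *₁ is associative; (2) *₁ is right distributive over +; (3) e is a two-sided identity for *₁; (4) x *₁ 0 = 0 and 0 *₁ x = 0; (5) the units of (V,*₁) are exactly the elements a : V with a (k−1) ≠ 0 and a j = 0 for all j ≠ k−1; (6) for any two distinct units a, b, the element a − b is a unit; and (7) for every unit u with u ≠ e and every x : V, x *₁ u = x implies x = 0. In other words, (V,+,*₁) is an af-near-ring whose units with 0 form a subnear-field isomorphic to F. -/
/-!
Call a vector scalar if it is supported on the last coordinate, i.e. of the form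
`q e = Pi.single (Fin.last n) q`. Scalars multiply like `F` because `α (Fin.last n) = id`,
right multiplication by `q e` twists coordinate `i` by `α i q`, and right multiplication by a
non-scalar `a` is `x ↦ x (Fin.last n) • a`. Associativity splits according to which factors are
scalar; the one delicate case is that a non-scalar times a nonzero scalar is again non-scalar,
since a near-field has no zero divisors and each `α i` is injective. The units are the nonzero
scalars, a copy of `F`, so differences of distinct units are units; and a unit `q e ≠ e` fixes no
nonzero `x`, since `x i * α i q = x i` forces `α i q = 1`, hence `q = 1`.
-/

open Classical in
noncomputable def nfMul {F : Type*} [AddGroup F] [Mul F] [One F] {n : ℕ}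
    (α : Fin (n + 1) → F → F) (x a : Fin (n + 1) → F) : Fin (n + 1) → F :=
  if ∀ j : Fin (n + 1), j ≠ Fin.last n → a j = 0 then
    fun i => x i * α i (a (Fin.last n))
  else
    fun i => x (Fin.last n) * a i

def nfE (F : Type*) [Zero F] [One F] (n : ℕ) : Fin (n + 1) → F :=
  fun i => if i = Fin.last n then 1 else 0

structure IsNearField (F : Type*) [AddGroup F] [Mul F] [One F] : Prop where
  mul_assoc : ∀ a b c : F, a * b * c = a * (b * c)
  add_mul : ∀ a b c : F, (a + b) * c = a * c + b * c
  mul_zero : ∀ a : F, a * 0 = 0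
  zero_mul : ∀ a : F, 0 * a = 0
  one_mul : ∀ a : F, 1 * a = a
  mul_one : ∀ a : F, a * 1 = a
  one_ne_zero : (1 : F) ≠ 0
  exists_inv : ∀ a : F, a ≠ 0 → ∃ b, a * b = 1 ∧ b * a = 1

namespace IsNearField

variable {F : Type*} [AddGroup F] [Mul F] [One F]

theorem mul_ne_zero (hF : IsNearField F) {a b : F} (ha : a ≠ 0) (hb : b ≠ 0) : a * b ≠ 0 := by
  intro hab
  obtain ⟨c, hbc, -⟩ := hF.exists_inv b hb
  apply ha
  calc a = a * (b * c) := by rw [hbc, hF.mul_one]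
    _ = 0 := by rw [← hF.mul_assoc, hab, hF.zero_mul]

theorem eq_one_of_mul_eq_self (hF : IsNearField F) {a t : F} (ha : a ≠ 0) (h : a * t = a) :
    t = 1 := by
  obtain ⟨c, -, hca⟩ := hF.exists_inv a ha
  calc t = c * a * t := by rw [hca, hF.one_mul]
    _ = 1 := by rw [hF.mul_assoc, h, hca]

theorem map_one (hF : IsNearField F) {f : F → F} (hinj : Function.Injective f) (h0 : f 0 = 0)
    (hmul : ∀ a b, f (a * b) = f a * f b) : f 1 = 1 :=
  hF.eq_one_of_mul_eq_self (fun h => hF.one_ne_zero (hinj (h.trans h0.symm)))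
    (by rw [← hmul, hF.one_mul])

end IsNearField

def IsScalar {F : Type*} [Zero F] {n : ℕ} (a : Fin (n + 1) → F) : Prop :=
  ∀ j, j ≠ Fin.last n → a j = 0

def IsNfUnit {F : Type*} [AddGroup F] [Mul F] [One F] {n : ℕ} (α : Fin (n + 1) → F → F)
    (u : Fin (n + 1) → F) : Prop :=
  ∃ v, nfMul α u v = nfE F n ∧ nfMul α v u = nfE F n

section Scalar

variable {F : Type*} [Zero F] {n : ℕ}

theorem isScalar_single (q : F) : IsScalar (Pi.single (Fin.last n) q) :=
  fun _ hj => Pi.single_eq_of_ne hj _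

theorem IsScalar.eq_single {a : Fin (n + 1) → F} (ha : IsScalar a) :
    a = Pi.single (Fin.last n) (a (Fin.last n)) := by
  funext i
  by_cases hi : i = Fin.last n
  · subst hi; simp
  · rw [ha i hi, Pi.single_eq_of_ne hi]

theorem isScalar_iff_exists_eq_single {a : Fin (n + 1) → F} :
    IsScalar a ↔ ∃ q, a = Pi.single (Fin.last n) q :=
  ⟨fun ha => ⟨_, ha.eq_single⟩, by rintro ⟨q, rfl⟩; exact isScalar_single q⟩

theorem nfE_eq_single [One F] : nfE F n = Pi.single (Fin.last n) 1 := by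
  funext i
  simp [nfE, Pi.single_apply]

theorem isScalar_nfE [One F] : IsScalar (nfE F n) :=
  nfE_eq_single (F := F) ▸ isScalar_single 1

end Scalar

section NfMul

variable {F : Type*} [AddGroup F] [Mul F] [One F] {n : ℕ} {α : Fin (n + 1) → F → F}

theorem nfMul_of_isScalar (x : Fin (n + 1) → F) {a : Fin (n + 1) → F} (ha : IsScalar a) :
    nfMul α x a = fun i => x i * α i (a (Fin.last n)) :=
  if_pos ha

theorem nfMul_of_not_isScalar (x : Fin (n + 1) → F) {a : Fin (n + 1) → F} (ha : ¬IsScalar a) :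
    nfMul α x a = x (Fin.last n) • a :=
  if_neg ha

theorem nfMul_single (x : Fin (n + 1) → F) (q : F) :
    nfMul α x (Pi.single (Fin.last n) q) = fun i => x i * α i q := by
  rw [nfMul_of_isScalar x (isScalar_single q), Pi.single_eq_same]

theorem nfMul_last (hαlast : α (Fin.last n) = id) (x a : Fin (n + 1) → F) :
    nfMul α x a (Fin.last n) = x (Fin.last n) * a (Fin.last n) := by
  by_cases ha : IsScalar a
  · simp only [nfMul_of_isScalar x ha, hαlast, id]
  · rw [nfMul_of_not_isScalar x ha, Pi.smul_apply, smul_eq_mul]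

theorem single_nfMul_single (hF : IsNearField F) (hαlast : α (Fin.last n) = id) (p q : F) :
    nfMul α (Pi.single (Fin.last n) p) (Pi.single (Fin.last n) q) =
      Pi.single (Fin.last n) (p * q) := by
  rw [nfMul_single]
  funext i
  by_cases hi : i = Fin.last n
  · subst hi; simp [hαlast]
  · simp only [Pi.single_eq_of_ne hi, hF.zero_mul]

theorem nfMul_zero (hF : IsNearField F) (hα0 : ∀ i, α i 0 = 0) (x : Fin (n + 1) → F) :
    nfMul α x 0 = 0 := by
  rw [← Pi.single_zero (Fin.last n), nfMul_single]
  funext i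
  rw [hα0, hF.mul_zero, Pi.single_zero, Pi.zero_apply]

theorem zero_nfMul (hF : IsNearField F) (a : Fin (n + 1) → F) : nfMul α 0 a = 0 := by
  unfold nfMul
  split_ifs <;> funext i <;> exact hF.zero_mul _

theorem add_nfMul (hF : IsNearField F) (x y a : Fin (n + 1) → F) :
    nfMul α (x + y) a = nfMul α x a + nfMul α y a := by
  unfold nfMul
  split_ifs <;> funext i <;> exact hF.add_mul _ _ _

theorem nfMul_smul_left (hF : IsNearField F) (t : F) (a b : Fin (n + 1) → F) :
    nfMul α (t • a) b = t • nfMul α a b := by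
  funext i
  by_cases hb : IsScalar b
  · simp only [nfMul_of_isScalar _ hb, Pi.smul_apply, smul_eq_mul, hF.mul_assoc]
  · simp only [nfMul_of_not_isScalar _ hb, Pi.smul_apply, smul_eq_mul, hF.mul_assoc]

theorem not_isScalar_smul (hF : IsNearField F) {t : F} (ht : t ≠ 0) {b : Fin (n + 1) → F}
    (hb : ¬IsScalar b) : ¬IsScalar (t • b) := by
  intro htb
  apply hb
  intro j hj
  by_contra hbj
  exact hF.mul_ne_zero ht hbj (htb j hj)

theorem nfMul_smul_of_not_isScalar (hF : IsNearField F) (hα0 : ∀ i, α i 0 = 0)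
    {b : Fin (n + 1) → F} (hb : ¬IsScalar b) (x : Fin (n + 1) → F) (t : F) :
    nfMul α x (t • b) = (x (Fin.last n) * t) • b := by
  by_cases ht : t = 0
  · have h0 : (0 : F) • b = 0 := funext fun i => hF.zero_mul (b i)
    rw [ht, h0, nfMul_zero hF hα0, hF.mul_zero, h0]
  · rw [nfMul_of_not_isScalar x (not_isScalar_smul hF ht hb)]
    funext i
    simp only [Pi.smul_apply, smul_eq_mul, hF.mul_assoc]

theorem not_isScalar_nfMul_single (hF : IsNearField F) (hα0 : ∀ i, α i 0 = 0)
    (hαinj : ∀ i, Function.Injective (α i)) {a : Fin (n + 1) → F} (ha : ¬IsScalar a) {q : F}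
    (hq : q ≠ 0) : ¬IsScalar (nfMul α a (Pi.single (Fin.last n) q)) := by
  rw [nfMul_single]
  intro h
  apply ha
  intro j hj
  by_contra haj
  have hαq : α j q ≠ 0 := fun h' => hq (hαinj j (h'.trans (hα0 j).symm))
  exact hF.mul_ne_zero haj hαq (h j hj)

theorem nfMul_assoc (hF : IsNearField F) (hα0 : ∀ i, α i 0 = 0)
    (hαinj : ∀ i, Function.Injective (α i)) (hαmul : ∀ i a b, α i (a * b) = α i a * α i b)
    (hαlast : α (Fin.last n) = id) (x a b : Fin (n + 1) → F) :
    nfMul α (nfMul α x a) b = nfMul α x (nfMul α a b) := by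
  by_cases hb : IsScalar b
  · obtain ⟨q, rfl⟩ := isScalar_iff_exists_eq_single.mp hb
    by_cases ha : IsScalar a
    · obtain ⟨p, rfl⟩ := isScalar_iff_exists_eq_single.mp ha
      rw [single_nfMul_single hF hαlast, nfMul_single, nfMul_single, nfMul_single]
      funext i
      rw [hαmul, hF.mul_assoc]
    · rw [nfMul_of_not_isScalar x ha, nfMul_smul_left hF]
      by_cases hq : q = 0
      · simp only [hq, Pi.single_zero, nfMul_zero hF hα0]
        funext i
        exact hF.mul_zero _
      · rw [nfMul_of_not_isScalar x (not_isScalar_nfMul_single hF hα0 hαinj ha hq)]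
  · rw [nfMul_of_not_isScalar _ hb, nfMul_of_not_isScalar a hb, nfMul_last hαlast,
      nfMul_smul_of_not_isScalar hF hα0 hb]

theorem nfMul_nfE (hF : IsNearField F) (hα0 : ∀ i, α i 0 = 0)
    (hαinj : ∀ i, Function.Injective (α i)) (hαmul : ∀ i a b, α i (a * b) = α i a * α i b)
    (x : Fin (n + 1) → F) : nfMul α x (nfE F n) = x := by
  rw [nfE_eq_single, nfMul_single]
  funext i
  rw [hF.map_one (hαinj i) (hα0 i) (hαmul i), hF.mul_one]

theorem nfE_nfMul (hF : IsNearField F) (hαlast : α (Fin.last n) = id) (x : Fin (n + 1) → F) :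
    nfMul α (nfE F n) x = x := by
  by_cases hx : IsScalar x
  · rw [hx.eq_single, nfE_eq_single, single_nfMul_single hF hαlast, hF.one_mul]
  · rw [nfMul_of_not_isScalar _ hx]
    funext i
    simp [nfE, hF.one_mul]

theorem last_mul_last_of_nfMul_eq_nfE (hαlast : α (Fin.last n) = id) {u v : Fin (n + 1) → F}
    (h : nfMul α u v = nfE F n) : u (Fin.last n) * v (Fin.last n) = 1 := by
  simpa [nfMul_last hαlast, nfE] using congrFun h (Fin.last n)

theorem isScalar_of_nfMul_eq_nfE (hF : IsNearField F) (hα0 : ∀ i, α i 0 = 0)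
    (hαinj : ∀ i, Function.Injective (α i)) (hαlast : α (Fin.last n) = id)
    {u v : Fin (n + 1) → F} (h : nfMul α u v = nfE F n) : IsScalar u := by
  have hL := last_mul_last_of_nfMul_eq_nfE hαlast h
  have huL : u (Fin.last n) ≠ 0 := fun h0 => hF.one_ne_zero (by rw [← hL, h0, hF.zero_mul])
  have hvL : v (Fin.last n) ≠ 0 := fun h0 => hF.one_ne_zero (by rw [← hL, h0, hF.mul_zero])
  have hv : IsScalar v := by
    by_contra hv
    apply not_isScalar_smul hF huL hv
    rw [← nfMul_of_not_isScalar u hv, h]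
    exact isScalar_nfE
  by_contra hu
  rw [hv.eq_single] at h
  exact not_isScalar_nfMul_single hF hα0 hαinj hu hvL (h ▸ isScalar_nfE)

theorem isNfUnit_iff (hF : IsNearField F) (hα0 : ∀ i, α i 0 = 0)
    (hαinj : ∀ i, Function.Injective (α i)) (hαlast : α (Fin.last n) = id)
    {u : Fin (n + 1) → F} : IsNfUnit α u ↔ u (Fin.last n) ≠ 0 ∧ IsScalar u := by
  constructor
  · rintro ⟨v, huv, -⟩
    have hL := last_mul_last_of_nfMul_eq_nfE hαlast huv
    exact ⟨fun h0 => hF.one_ne_zero (by rw [← hL, h0, hF.zero_mul]),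
      isScalar_of_nfMul_eq_nfE hF hα0 hαinj hαlast huv⟩
  · rintro ⟨hp, hu⟩
    obtain ⟨c, hpc, hcp⟩ := hF.exists_inv _ hp
    rw [hu.eq_single]
    exact ⟨Pi.single _ c, by rw [single_nfMul_single hF hαlast, hpc, nfE_eq_single],
      by rw [single_nfMul_single hF hαlast, hcp, nfE_eq_single]⟩

theorem IsNfUnit.sub (hF : IsNearField F) (hα0 : ∀ i, α i 0 = 0)
    (hαinj : ∀ i, Function.Injective (α i)) (hαlast : α (Fin.last n) = id)
    {a b : Fin (n + 1) → F} (ha : IsNfUnit α a) (hb : IsNfUnit α b) (hab : a ≠ b) :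
    IsNfUnit α (a - b) := by
  obtain ⟨-, ha⟩ := (isNfUnit_iff hF hα0 hαinj hαlast).mp ha
  obtain ⟨-, hb⟩ := (isNfUnit_iff hF hα0 hαinj hαlast).mp hb
  refine (isNfUnit_iff hF hα0 hαinj hαlast).mpr ⟨?_, fun j hj => ?_⟩
  · rw [Pi.sub_apply, sub_ne_zero]
    exact fun h => hab (by rw [ha.eq_single, hb.eq_single, h])
  · rw [Pi.sub_apply, ha j hj, hb j hj, sub_zero]

theorem IsNfUnit.eq_zero_of_nfMul_eq_self (hF : IsNearField F) (hα0 : ∀ i, α i 0 = 0)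
    (hαinj : ∀ i, Function.Injective (α i)) (hαmul : ∀ i a b, α i (a * b) = α i a * α i b)
    (hαlast : α (Fin.last n) = id) {u x : Fin (n + 1) → F} (hu : IsNfUnit α u)
    (hne : u ≠ nfE F n) (hx : nfMul α x u = x) : x = 0 := by
  obtain ⟨-, hus⟩ := (isNfUnit_iff hF hα0 hαinj hαlast).mp hu
  rw [hus.eq_single, nfMul_single] at hx
  funext i
  by_contra hxi
  have h1 : α i (u (Fin.last n)) = α i 1 := by
    rw [hF.eq_one_of_mul_eq_self hxi (congrFun hx i), hF.map_one (hαinj i) (hα0 i) (hαmul i)]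
  exact hne (by rw [hus.eq_single, nfE_eq_single, hαinj i h1])

end NfMul

/-- For a near-field `F` and multiplicative automorphisms `α i`
(zero preserving, the last one the identity), `(Fin (n+1) → F, +, *₁)` is an
af-near-ring whose units are the vectors supported on the last coordinate. -/
theorem stmt9 {F : Type*} [AddGroup F] [Mul F] [One F]
    (hassoc : ∀ a b c : F, (a * b) * c = a * (b * c))
    (hdist : ∀ a b c : F, (a + b) * c = a * c + b * c)
    (hzr : ∀ a : F, a * 0 = 0) (hzl : ∀ a : F, 0 * a = 0)
    (honel : ∀ a : F, 1 * a = a) (honer : ∀ a : F, a * 1 = a)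
    (hnt : (1 : F) ≠ 0)
    (hinv : ∀ a : F, a ≠ 0 → ∃ b : F, a * b = 1 ∧ b * a = 1)
    (n : ℕ) (α : Fin (n + 1) → F → F)
    (hαbij : ∀ i, Function.Bijective (α i))
    (hα0 : ∀ i, α i 0 = 0)
    (hαmul : ∀ i, ∀ a b : F, α i (a * b) = α i a * α i b)
    (hαlast : α (Fin.last n) = id) :
    (∀ x a b : Fin (n + 1) → F,
      nfMul α (nfMul α x a) b = nfMul α x (nfMul α a b)) ∧        -- (1) associativity
    (∀ x y a : Fin (n + 1) → F,
      nfMul α (x + y) a = nfMul α x a + nfMul α y a) ∧            -- (2) right distributivity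
    (∀ x : Fin (n + 1) → F,
      nfMul α x (nfE F n) = x ∧ nfMul α (nfE F n) x = x) ∧        -- (3) e is a two-sided identity
    (∀ x : Fin (n + 1) → F, nfMul α x 0 = 0 ∧ nfMul α 0 x = 0) ∧  -- (4) zero symmetry
    (∀ u : Fin (n + 1) → F,
      (∃ v, nfMul α u v = nfE F n ∧ nfMul α v u = nfE F n) ↔
        (u (Fin.last n) ≠ 0 ∧ ∀ j, j ≠ Fin.last n → u j = 0)) ∧   -- (5) description of the units
    (∀ a b : Fin (n + 1) → F,
      (∃ v, nfMul α a v = nfE F n ∧ nfMul α v a = nfE F n) →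
      (∃ v, nfMul α b v = nfE F n ∧ nfMul α v b = nfE F n) →
      a ≠ b →
      ∃ v, nfMul α (a - b) v = nfE F n ∧ nfMul α v (a - b) = nfE F n) ∧ -- (6) a-near-ring
    (∀ u : Fin (n + 1) → F,
      (∃ v, nfMul α u v = nfE F n ∧ nfMul α v u = nfE F n) →
      u ≠ nfE F n →
      ∀ x : Fin (n + 1) → F, nfMul α x u = x → x = 0) := by       -- (7) f-near-ring
  have hF : IsNearField F := ⟨hassoc, hdist, hzr, hzl, honel, honer, hnt, hinv⟩
  have hαinj : ∀ i, Function.Injective (α i) := fun i => (hαbij i).injective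
  exact ⟨nfMul_assoc hF hα0 hαinj hαmul hαlast, add_nfMul hF,
    fun x => ⟨nfMul_nfE hF hα0 hαinj hαmul x, nfE_nfMul hF hαlast x⟩,
    fun x => ⟨nfMul_zero hF hα0 x, zero_nfMul hF x⟩,
    fun _ => isNfUnit_iff hF hα0 hαinj hαlast,
    fun _ _ => IsNfUnit.sub hF hα0 hαinj hαlast,
    fun _ hu hne _ => IsNfUnit.eq_zero_of_nfMul_eq_self hF hα0 hαinj hαmul hαlast hu hne⟩
end

section
/- Let N be a finite nontrivial a-near-ring. Then p := addOrderOf (1 : N) is a prime number and the additive group (N,+) has exponent p; in particular p • n = 0 for every n : N. -/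
/-!
Every multiple `k • 1` is either `0` or a unit: passing from `k • 1` to `(k + 1) • 1 = k • 1 - (-1)`
stays inside the set of units and `0` because `-1` is a unit, `(-1) * (-1) = 1`. If
`p = addOrderOf 1` factors as `m * c` with `c • 1` a unit with right inverse `w`, right
distributivity gives `m • 1 = (m • (c • 1)) * w = (p • 1) * w = 0`, so `p ∣ m`; hence `p` is
prime. Finally `p • n = (p • 1) * n = 0 * n = 0`.
-/

def HasTwoSidedInverse {N : Type*} [Mul N] [One N] (u : N) : Prop :=
  ∃ v : N, u * v = 1 ∧ v * u = 1

section RightDistrib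

variable {N : Type*} [AddGroup N] [Mul N] [RightDistribClass N]

theorem zero_mul_of_rightDistrib (a : N) : 0 * a = 0 := by
  have h : 0 * a = 0 * a + 0 * a := by rw [← add_mul, add_zero]
  exact left_eq_add.mp h

theorem nsmul_mul_of_rightDistrib (k : ℕ) (x y : N) : (k • x) * y = k • (x * y) := by
  induction k with
  | zero => simp only [zero_smul, zero_mul_of_rightDistrib]
  | succ k ih => rw [succ_nsmul, add_mul, ih, succ_nsmul]

theorem nsmul_one_eq_zero_of_nsmul_eq_zero [One N] {x w : N} (hw : x * w = 1) {m : ℕ}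
    (hm : m • x = 0) : m • (1 : N) = 0 := by
  rw [← hw, ← nsmul_mul_of_rightDistrib, hm, zero_mul_of_rightDistrib]

theorem prime_addOrderOf_one [One N] (hnt : (0 : N) ≠ 1) (hfin : IsOfFinAddOrder (1 : N))
    (hinv : ∀ k : ℕ, k • (1 : N) ≠ 0 → ∃ w, (k • (1 : N)) * w = 1) :
    (addOrderOf (1 : N)).Prime := by
  set p := addOrderOf (1 : N)
  have hp : 0 < p := hfin.addOrderOf_pos
  have hp1 : p ≠ 1 := fun h => hnt (AddMonoid.addOrderOf_eq_one_iff.mp h).symm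
  refine Nat.prime_def.mpr ⟨by omega, fun m ⟨c, hc⟩ => ?_⟩
  have hmc : m • (c • (1 : N)) = 0 := by
    rw [← mul_nsmul', ← hc, addOrderOf_nsmul_eq_zero]
  by_cases hc1 : c • (1 : N) = 0
  · have hpc : p = c :=
      Nat.dvd_antisymm (addOrderOf_dvd_of_nsmul_eq_zero hc1) (Dvd.intro_left m hc.symm)
    left
    rw [← hpc] at hc
    exact (Nat.mul_eq_right hp.ne').mp hc.symm
  · obtain ⟨w, hw⟩ := hinv c hc1
    exact Or.inr <| Nat.dvd_antisymm (Dvd.intro c hc.symm)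
      (addOrderOf_dvd_of_nsmul_eq_zero (nsmul_one_eq_zero_of_nsmul_eq_zero hw hmc))

variable [One N]

theorem addOrderOf_one_nsmul_eq_zero (honel : ∀ a : N, 1 * a = a) (n : N) :
    addOrderOf (1 : N) • n = 0 := by
  rw [← honel n, ← nsmul_mul_of_rightDistrib, addOrderOf_nsmul_eq_zero, zero_mul_of_rightDistrib]

theorem neg_one_mul_neg_one_of_one_mul (honel : ∀ a : N, 1 * a = a) : (-1 : N) * (-1) = 1 := by
  have h : (-1 + 1 : N) * (-1) = (-1) * (-1) + -1 := by rw [add_mul, honel]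
  rw [neg_add_cancel, zero_mul_of_rightDistrib] at h
  exact add_neg_eq_zero.mp h.symm

theorem nsmul_one_eq_zero_or_hasTwoSidedInverse (honel : ∀ a : N, 1 * a = a)
    (hsub : ∀ a b : N, HasTwoSidedInverse a → HasTwoSidedInverse b → a ≠ b →
      HasTwoSidedInverse (a - b)) (k : ℕ) :
    k • (1 : N) = 0 ∨ HasTwoSidedInverse (k • (1 : N)) := by
  have hneg : HasTwoSidedInverse (-1 : N) :=
    ⟨-1, neg_one_mul_neg_one_of_one_mul honel, neg_one_mul_neg_one_of_one_mul honel⟩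
  induction k with
  | zero => exact Or.inl (zero_nsmul 1)
  | succ k ih =>
    rw [succ_nsmul]
    rcases ih with hk | hk
    · exact Or.inr (by rw [hk, zero_add]; exact ⟨1, honel 1, honel 1⟩)
    · by_cases hk1 : k • (1 : N) = -1
      · exact Or.inl (by rw [hk1, neg_add_cancel])
      · exact Or.inr (by simpa only [sub_neg_eq_add] using hsub _ _ hk hneg hk1)

end RightDistrib

theorem stmt11_general {N : Type*} [AddGroup N] [Mul N] [One N] [Finite N]
    (hdist : ∀ a b c : N, (a + b) * c = a * c + b * c)
    (honel : ∀ a : N, 1 * a = a)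
    (ha : ∀ a b : N, (∃ v : N, a * v = 1 ∧ v * a = 1) →
      (∃ v : N, b * v = 1 ∧ v * b = 1) → a ≠ b →
      ∃ v : N, (a - b) * v = 1 ∧ v * (a - b) = 1)
    (hnt : (0 : N) ≠ 1) :
    Nat.Prime (addOrderOf (1 : N)) ∧ ∀ n : N, addOrderOf (1 : N) • n = 0 := by
  have : RightDistribClass N := ⟨hdist⟩
  refine ⟨prime_addOrderOf_one hnt (isOfFinAddOrder_of_finite 1) fun k hk => ?_,
    addOrderOf_one_nsmul_eq_zero honel⟩
  obtain ⟨w, hw, -⟩ := (nsmul_one_eq_zero_or_hasTwoSidedInverse honel ha k).resolve_left hk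
  exact ⟨w, hw⟩

/-- The additive group of a finite nontrivial a-near-ring has prime
exponent `p = addOrderOf 1`. -/
theorem stmt11 {N : Type*} [AddGroup N] [Mul N] [One N] [Finite N]
    (hassoc : ∀ a b c : N, (a * b) * c = a * (b * c))
    (hdist : ∀ a b c : N, (a + b) * c = a * c + b * c)
    (honel : ∀ a : N, 1 * a = a) (honer : ∀ a : N, a * 1 = a)
    (hzero : ∀ a : N, a * 0 = 0)
    (ha : ∀ a b : N, (∃ v : N, a * v = 1 ∧ v * a = 1) →
      (∃ v : N, b * v = 1 ∧ v * b = 1) → a ≠ b →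
      ∃ v : N, (a - b) * v = 1 ∧ v * (a - b) = 1)
    (hnt : (0 : N) ≠ 1) :
    Nat.Prime (addOrderOf (1 : N)) ∧ ∀ n : N, addOrderOf (1 : N) • n = 0 :=
  stmt11_general hdist honel ha hnt
end

section
/- Let N be a finite nontrivial f-near-ring. Then the additive group (N,+) is elementary abelian: addition on N is commutative, p := addOrderOf (1 : N) is a prime, and p • n = 0 for every n : N. -/
/-!
Right multiplication by `-1` is an additive endomorphism `σ` of `N` with `σ ∘ σ = id`. If
`-1 ≠ 1` the f-property makes `σ` fixed-point-free, and a finite group with a fixed-point-free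
involutive automorphism is abelian (the automorphism is inversion); if `-1 = 1`, then
`-n = (-1) * n = n` for every `n`.

The additive hom `ZMod p → N`, `k ↦ k • 1` (with `p` the additive order of `1`), is injective
and multiplicative, so `ZMod p` inherits the f-property. For composite `p` it fails in `ZMod p`:
either `p` has a square factor and `1 + z` with `z ^ 2 = 0` fixes `z`, or `p = a * b` with
coprime factors and `(1, -1)` fixes `(1, 0)` in `ZMod a × ZMod b`.

Finally `p • n = (p • 1) * n = 0`.
-/

open Function

/-- The negation of the f-property for a monoid with zero. -/
def ExistsUnitFixingNonzero (R : Type*) [MonoidWithZero R] : Prop :=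
  ∃ u x : R, IsUnit u ∧ u ≠ 1 ∧ x ≠ 0 ∧ x * u = x

namespace ExistsUnitFixingNonzero

theorem of_mul_self_eq_zero {R : Type*} [Ring R] {z : R} (hz : z ≠ 0) (hzz : z * z = 0) :
    ExistsUnitFixingNonzero R :=
  ⟨1 + z, z, IsNilpotent.isUnit_one_add ⟨2, by rw [sq, hzz]⟩,
    fun h => hz (by simpa using h), hz, by rw [mul_add, mul_one, hzz, add_zero]⟩

theorem prod {R S : Type*} [Ring R] [Ring S] [Nontrivial R] (hS : (-1 : S) ≠ 1) :
    ExistsUnitFixingNonzero (R × S) :=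
  ⟨(1, -1), (1, 0), isUnit_iff_exists.mpr ⟨(1, -1), by simp, by simp⟩,
    fun h => hS (congrArg Prod.snd h), fun h => one_ne_zero (congrArg Prod.fst h), by simp⟩

theorem of_ringEquiv {R S : Type*} [Semiring R] [Semiring S] (e : R ≃+* S)
    (h : ExistsUnitFixingNonzero S) : ExistsUnitFixingNonzero R := by
  obtain ⟨u, x, hu, hu1, hx, hxu⟩ := h
  refine ⟨e.symm u, e.symm x, hu.map e.symm, ?_, ?_, by rw [← map_mul, hxu]⟩
  · rwa [Ne, ← map_one e.symm, e.symm.injective.eq_iff]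
  · rwa [Ne, map_eq_zero_iff e.symm e.symm.injective]

end ExistsUnitFixingNonzero

namespace ZMod

theorem existsUnitFixingNonzero_of_coprime {a b : ℕ} (hab : a.Coprime b) (ha : 1 < a)
    (hb : 2 < b) : ExistsUnitFixingNonzero (ZMod (a * b)) :=
  have : Fact (1 < a) := ⟨ha⟩
  have : Fact (2 < b) := ⟨hb⟩
  .of_ringEquiv (chineseRemainder hab) (.prod neg_one_ne_one)

theorem existsUnitFixingNonzero_of_not_prime {n : ℕ} (hn : 1 < n) (hnp : ¬n.Prime) :
    ExistsUnitFixingNonzero (ZMod n) := by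
  obtain ⟨q, hq, m, rfl⟩ := Nat.exists_prime_and_dvd hn.ne'
  have hm : 1 < m := by
    by_contra! hm
    interval_cases m
    · omega
    · exact hnp (by simpa using hq)
  by_cases hqm : q ∣ m
  · refine .of_mul_self_eq_zero (z := (m : ZMod (q * m))) ?_ ?_
    · rw [Ne, natCast_eq_zero_iff]
      exact fun h => (Nat.le_of_dvd (by omega) h).not_gt (lt_mul_left (by omega) hq.one_lt)
    · rw [← Nat.cast_mul, natCast_eq_zero_iff]
      exact mul_dvd_mul_right hqm m
  · have hcop : q.Coprime m := (Nat.Prime.coprime_iff_not_dvd hq).mpr hqm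
    rcases (show 2 < m ∨ m = 2 by omega) with hm2 | rfl
    · exact existsUnitFixingNonzero_of_coprime hcop hq.one_lt hm2
    · have hq2 : 2 < q := lt_of_le_of_ne hq.two_le (by rintro rfl; exact hqm dvd_rfl)
      rw [mul_comm]
      exact existsUnitFixingNonzero_of_coprime hcop.symm one_lt_two hq2

end ZMod

namespace NearRing

variable {N : Type*} [AddGroup N]

section Mul

variable [Mul N]

def mulRightAddHom (hdist : ∀ a b c : N, (a + b) * c = a * c + b * c) (c : N) : N →+ N :=
  AddMonoidHom.mk' (· * c) fun a b => hdist a b c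

theorem zero_mul (hdist : ∀ a b c : N, (a + b) * c = a * c + b * c) (a : N) : 0 * a = 0 :=
  map_zero (mulRightAddHom hdist a)

theorem neg_mul (hdist : ∀ a b c : N, (a + b) * c = a * c + b * c) (a b : N) :
    -a * b = -(a * b) :=
  map_neg (mulRightAddHom hdist b) a

theorem nsmul_mul (hdist : ∀ a b c : N, (a + b) * c = a * c + b * c) (k : ℕ) (a b : N) :
    (k • a) * b = k • (a * b) :=
  map_nsmul (mulRightAddHom hdist b) k a

theorem zsmul_mul (hdist : ∀ a b c : N, (a + b) * c = a * c + b * c) (i : ℤ) (a b : N) :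
    (i • a) * b = i • (a * b) :=
  map_zsmul (mulRightAddHom hdist b) i a

variable [One N]

theorem neg_one_mul_neg_one (hdist : ∀ a b c : N, (a + b) * c = a * c + b * c)
    (honel : ∀ a : N, 1 * a = a) : (-1 : N) * -1 = 1 := by
  rw [neg_mul hdist, honel, neg_neg]

theorem add_comm_of_neg_one_eq_one (hdist : ∀ a b c : N, (a + b) * c = a * c + b * c)
    (honel : ∀ a : N, 1 * a = a) (h : (-1 : N) = 1) (a b : N) : a + b = b + a := by
  have hneg (x : N) : -x = x := by
    rw [← honel x, ← neg_mul hdist, h]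
  rw [← hneg (a + b), neg_add_rev, hneg, hneg]

theorem add_comm_of_neg_one_ne_one [Finite N] (hassoc : ∀ a b c : N, (a * b) * c = a * (b * c))
    (hdist : ∀ a b c : N, (a + b) * c = a * c + b * c)
    (honel : ∀ a : N, 1 * a = a) (honer : ∀ a : N, a * 1 = a)
    (hf : ∀ u : N, (∃ v : N, u * v = 1 ∧ v * u = 1) → u ≠ 1 →
      ∀ n : N, n * u = n → n = 0)
    (h : (-1 : N) ≠ 1) (a b : N) : a + b = b + a := by
  let σ := AddMonoidHom.toMultiplicative (mulRightAddHom hdist (-1))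
  have hsq := neg_one_mul_neg_one hdist honel
  have hinv : Involutive σ := fun n => by
    change n.toAdd * -1 * -1 = n.toAdd
    rw [hassoc, hsq, honer]
  have hfree : MonoidHom.FixedPointFree σ := hf (-1) ⟨-1, hsq, hsq⟩ h
  exact (hfree.commute_all_of_involutive hinv (.ofAdd a) (.ofAdd b)).eq

theorem addOrderOf_one_nsmul (hdist : ∀ a b c : N, (a + b) * c = a * c + b * c)
    (honel : ∀ a : N, 1 * a = a) (n : N) : addOrderOf (1 : N) • n = 0 := by
  rw [← honel n, ← nsmul_mul hdist, addOrderOf_nsmul_eq_zero, zero_mul hdist]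

end Mul

section One

variable [One N]

variable (N) in
noncomputable def zmodAddHom : ZMod (addOrderOf (1 : N)) →+ N :=
  ZMod.lift _ ⟨zmultiplesHom N 1, by simp [addOrderOf_nsmul_eq_zero]⟩

theorem zmodAddHom_intCast (i : ℤ) : zmodAddHom N i = i • 1 := by
  simp [zmodAddHom]

theorem zmodAddHom_one : zmodAddHom N 1 = 1 := by
  rw [← Int.cast_one, zmodAddHom_intCast, one_zsmul]

theorem zmodAddHom_injective : Injective (zmodAddHom N) :=
  (ZMod.lift_injective _).mpr fun i hi =>
    (ZMod.intCast_zmod_eq_zero_iff_dvd i _).mpr (addOrderOf_dvd_iff_zsmul_eq_zero.mpr hi)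

variable [Mul N]

theorem zmodAddHom_mul (hdist : ∀ a b c : N, (a + b) * c = a * c + b * c)
    (honel : ∀ a : N, 1 * a = a) (x y : ZMod (addOrderOf (1 : N))) :
    zmodAddHom N (x * y) = zmodAddHom N x * zmodAddHom N y := by
  obtain ⟨i, rfl⟩ := ZMod.intCast_surjective x
  obtain ⟨j, rfl⟩ := ZMod.intCast_surjective y
  rw [← Int.cast_mul, zmodAddHom_intCast, zmodAddHom_intCast, zmodAddHom_intCast,
    zsmul_mul hdist, honel, mul_zsmul]

theorem not_existsUnitFixingNonzero_zmod (hdist : ∀ a b c : N, (a + b) * c = a * c + b * c)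
    (honel : ∀ a : N, 1 * a = a)
    (hf : ∀ u : N, (∃ v : N, u * v = 1 ∧ v * u = 1) → u ≠ 1 →
      ∀ n : N, n * u = n → n = 0) :
    ¬ExistsUnitFixingNonzero (ZMod (addOrderOf (1 : N))) := by
  rintro ⟨u, x, hu, hu1, hx, hxu⟩
  obtain ⟨v, huv⟩ := hu.exists_right_inv
  have hmul := zmodAddHom_mul hdist honel
  have hu1' : zmodAddHom N u ≠ 1 := fun h =>
    hu1 (zmodAddHom_injective (h.trans zmodAddHom_one.symm))
  refine hx (zmodAddHom_injective ?_)
  rw [map_zero]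
  refine hf (zmodAddHom N u) ⟨zmodAddHom N v, ?_, ?_⟩ hu1' _ (by rw [← hmul, hxu])
  · rw [← hmul, huv, zmodAddHom_one]
  · rw [← hmul, mul_comm, huv, zmodAddHom_one]

end One

end NearRing

theorem stmt12_general {N : Type*} [AddGroup N] [Mul N] [One N] [Finite N]
    (hassoc : ∀ a b c : N, (a * b) * c = a * (b * c))
    (hdist : ∀ a b c : N, (a + b) * c = a * c + b * c)
    (honel : ∀ a : N, 1 * a = a) (honer : ∀ a : N, a * 1 = a)
    (hf : ∀ u : N, (∃ v : N, u * v = 1 ∧ v * u = 1) → u ≠ 1 →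
      ∀ n : N, n * u = n → n = 0)
    (hnt : (0 : N) ≠ 1) :
    (∀ a b : N, a + b = b + a) ∧
    Nat.Prime (addOrderOf (1 : N)) ∧
    (∀ n : N, addOrderOf (1 : N) • n = 0) := by
  have hp : 1 < addOrderOf (1 : N) :=
    lt_of_le_of_ne (addOrderOf_pos 1) fun h => hnt (AddMonoid.addOrderOf_eq_one_iff.mp h.symm).symm
  refine ⟨?_, ?_, NearRing.addOrderOf_one_nsmul hdist honel⟩
  · by_cases h : (-1 : N) = 1
    · exact NearRing.add_comm_of_neg_one_eq_one hdist honel h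
    · exact NearRing.add_comm_of_neg_one_ne_one hassoc hdist honel honer hf h
  · by_contra hnp
    exact NearRing.not_existsUnitFixingNonzero_zmod hdist honel hf
      (ZMod.existsUnitFixingNonzero_of_not_prime hp hnp)

/-- The additive group of a finite nontrivial f-near-ring is
elementary abelian of prime exponent `p = addOrderOf 1`. -/
theorem stmt12 {N : Type*} [AddGroup N] [Mul N] [One N] [Finite N]
    (hassoc : ∀ a b c : N, (a * b) * c = a * (b * c))
    (hdist : ∀ a b c : N, (a + b) * c = a * c + b * c)
    (honel : ∀ a : N, 1 * a = a) (honer : ∀ a : N, a * 1 = a)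
    (hzero : ∀ a : N, a * 0 = 0)
    (hf : ∀ u : N, (∃ v : N, u * v = 1 ∧ v * u = 1) → u ≠ 1 →
      ∀ n : N, n * u = n → n = 0)
    (hnt : (0 : N) ≠ 1) :
    (∀ a b : N, a + b = b + a) ∧
    Nat.Prime (addOrderOf (1 : N)) ∧
    (∀ n : N, addOrderOf (1 : N) • n = 0) :=
  stmt12_general hassoc hdist honel honer hf hnt
end

section
/- Let N be a nontrivial a-near-ring satisfying the DCCN which is simple and not left distributive (there exist a, b, c : N with a*(b+c) ≠ a*b + a*c). Then either every nonzero element of N is a unit (N is a near-field), or N is isomorphic to M₀(ℤ₃): there exists a bijection φ from N onto the set {f : ZMod 3 → ZMod 3 | f 0 = 0} such that φ(a+b) = φ(a) + φ(b) (pointwise addition) and φ(a*b) = φ(a) ∘ φ(b) for all a, b : N. -/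
/-!
Let `M` be a minimal nonzero `N`-subgroup. Its annihilator is an ideal, so by simplicity `N` acts
faithfully on `M`, and by the DCCN some finite `s ⊆ M` already has trivial annihilator. For `s`
minimal, `ann (s \ {x}) * x = M` for every `x ∈ s`, so the values `n * x` (`x ∈ s`) can
be prescribed arbitrarily in `M`.

If `s = {a}`, then `n ↦ n * a` is injective and every nonzero element has a left inverse, so `N`
is a near-field. Otherwise, if `ann (s \ {x}) * c = M` held for two distinct `x ∈ s`, `N` would
be left distributive; hence every nonzero `c ∈ M` has the annihilator of some `b ∈ s`, and there
is a unit sending `b` to `c` and fixing the rest of `s`. In an a-near-ring a unit `u ≠ 1` has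
`u - 1` invertible, so it fixes no nonzero element. Thus `M \ {0} = s`, and a transposition of
three points of `s` shows `|s| = 2`. So `|M| = 3`, and `N` is the near-ring of zero-preserving
maps of `M ≅ ℤ₃`.
-/

section

variable {N : Type*} [AddGroup N] [Mul N]

def IsNSubgroup (A : AddSubgroup N) : Prop := ∀ n : N, ∀ m ∈ A, n * m ∈ A

def DCCN (N : Type*) [AddGroup N] [Mul N] : Prop :=
  ∀ f : ℕ → AddSubgroup N, Antitone f → (∀ i : ℕ, ∀ n : N, ∀ m ∈ f i, n * m ∈ f i) →
    ∃ k : ℕ, ∀ j ≥ k, f j = f k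

abbrev IsMinimalNSubgroup (M : AddSubgroup N) : Prop :=
  Minimal (fun A : AddSubgroup N => IsNSubgroup A ∧ A ≠ ⊥) M

theorem exists_minimal_of_dccn (hdcc : DCCN N) {P : AddSubgroup N → Prop}
    (hP : ∀ A, P A → IsNSubgroup A) (hne : ∃ A, P A) : ∃ A, Minimal P A := by
  have : WellFoundedLT {A : AddSubgroup N // IsNSubgroup A} := by
    rw [← wellFoundedGT_dual_iff, wellFoundedGT_iff_monotone_chain_condition]
    intro a
    obtain ⟨k, hk⟩ := hdcc (fun i => (OrderDual.ofDual (a i)).1)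
      (fun i j hij => a.monotone hij) (fun i => (OrderDual.ofDual (a i)).2)
    exact ⟨k, fun j hj => Subtype.ext (hk j hj).symm⟩
  obtain ⟨A, hA⟩ := hne
  obtain ⟨⟨B, _⟩, hB⟩ :=
    exists_minimal_of_wellFoundedLT (fun B : {A // IsNSubgroup A} => P B.1) ⟨⟨A, hP A hA⟩, hA⟩
  exact ⟨B, hB.1, fun C hC hCB => hB.2 (y := ⟨C, hP C hC⟩) hC hCB⟩

variable [One N]

structure IsNearRing (N : Type*) [AddGroup N] [Mul N] [One N] : Prop where
  mul_assoc : ∀ a b c : N, a * b * c = a * (b * c)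
  add_mul : ∀ a b c : N, (a + b) * c = a * c + b * c
  one_mul : ∀ a : N, 1 * a = a
  mul_one : ∀ a : N, a * 1 = a
  mul_zero : ∀ a : N, a * 0 = 0

def IsInvertible (u : N) : Prop := ∃ v : N, u * v = 1 ∧ v * u = 1

def IsANearRing (N : Type*) [AddGroup N] [Mul N] [One N] : Prop :=
  ∀ a b : N, IsInvertible a → IsInvertible b → a ≠ b → IsInvertible (a - b)

namespace IsNearRing

theorem zero_mul (h : IsNearRing N) (a : N) : 0 * a = 0 :=
  (add_left_cancel (a := 0 * a) (by rw [← h.add_mul, add_zero, add_zero])).symm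

theorem sub_mul (h : IsNearRing N) (a b c : N) : (a - b) * c = a * c - b * c := by
  have hneg : -b * c = -(b * c) :=
    eq_neg_of_add_eq_zero_left (by rw [← h.add_mul, neg_add_cancel, h.zero_mul])
  rw [sub_eq_add_neg, h.add_mul, hneg, ← sub_eq_add_neg]

def mulRight (h : IsNearRing N) (c : N) : N →+ N :=
  AddMonoidHom.mk' (· * c) fun a b => h.add_mul a b c

def ann (h : IsNearRing N) (S : Set N) : AddSubgroup N := ⨅ x ∈ S, (h.mulRight x).ker

@[simp]
theorem mem_ann (h : IsNearRing N) {S : Set N} {n : N} :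
    n ∈ h.ann S ↔ ∀ x ∈ S, n * x = 0 := by
  simp [ann, AddSubgroup.mem_iInf, mulRight]

theorem mem_ann_singleton (h : IsNearRing N) {c n : N} : n ∈ h.ann {c} ↔ n * c = 0 := by simp

theorem ann_anti (h : IsNearRing N) {S T : Set N} (hST : S ⊆ T) : h.ann T ≤ h.ann S :=
  fun _ hn => h.mem_ann.2 fun x hx => h.mem_ann.1 hn x (hST hx)

theorem isNSubgroup_ann (h : IsNearRing N) (S : Set N) : IsNSubgroup (h.ann S) :=
  fun n m hm => h.mem_ann.2 fun x hx => by rw [h.mul_assoc, h.mem_ann.1 hm x hx, h.mul_zero]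

theorem eq_of_ann_eq_bot (h : IsNearRing N) {S : Set N} (hS : h.ann S = ⊥) {n n' : N}
    (hnn' : ∀ x ∈ S, n * x = n' * x) : n = n' := by
  have hmem : n - n' ∈ h.ann S :=
    h.mem_ann.2 fun x hx => by rw [h.sub_mul, hnn' x hx, sub_self]
  rw [hS, AddSubgroup.mem_bot] at hmem
  exact sub_eq_zero.1 hmem

theorem mul_eq_mul_of_ann_le (h : IsNearRing N) {b c n n' : N} (hbc : h.ann {b} ≤ h.ann {c})
    (hn : n * b = n' * b) : n * c = n' * c := by
  have hmem : n - n' ∈ h.ann {c} :=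
    hbc (h.mem_ann_singleton.2 (by rw [h.sub_mul, hn, sub_self]))
  rw [h.mem_ann_singleton, h.sub_mul] at hmem
  exact sub_eq_zero.1 hmem

theorem eq_one_of_isInvertible_of_mul_eq_self (h : IsNearRing N) (ha : IsANearRing N) {u x : N}
    (hu : IsInvertible u) (hux : u * x = x) (hx : x ≠ 0) : u = 1 := by
  by_contra hu1
  obtain ⟨w, -, hw⟩ := ha u 1 hu ⟨1, h.one_mul 1, h.one_mul 1⟩ hu1
  apply hx
  calc x = w * (u - 1) * x := by rw [hw, h.one_mul]
    _ = 0 := by rw [h.mul_assoc, h.sub_mul, hux, h.one_mul, sub_self, h.mul_zero]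

theorem mul_add_of_disjoint (h : IsNearRing N) {S : Set N} (hS : h.ann S = ⊥) {p q : N}
    (hpq : ∀ z ∈ S, p * z = 0 ∨ q * z = 0) (n : N) : n * (p + q) = n * p + n * q :=
  h.eq_of_ann_eq_bot hS fun z hz => by
    rw [h.mul_assoc, h.add_mul, h.add_mul, h.mul_assoc, h.mul_assoc]
    rcases hpq z hz with h0 | h0 <;> rw [h0, h.mul_zero] <;> simp only [zero_add, add_zero]

theorem iSup_ann_erase_le [DecidableEq N] (h : IsNearRing N) (s T : Finset N) :
    ⨆ x ∈ T, h.ann ↑(s.erase x) ≤ h.ann ↑(s \ T) :=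
  iSup₂_le fun x hx => h.ann_anti fun y hy => by
    simp only [Finset.coe_sdiff, Set.mem_sdiff, Finset.mem_coe] at hy
    exact Finset.mem_erase.2 ⟨fun hyx => hy.2 (hyx ▸ hx), hy.1⟩

theorem ann_eq_bot_of_simple (h : IsNearRing N)
    (hsimple : ∀ I : AddSubgroup N,
      (∀ n : N, ∀ i ∈ I, n + i - n ∈ I) →
      (∀ i ∈ I, ∀ n : N, i * n ∈ I) →
      (∀ n m : N, ∀ i ∈ I, n * (m + i) - n * m ∈ I) →
      I = ⊥ ∨ I = ⊤)
    {M : AddSubgroup N} (hM : IsNSubgroup M) (hM0 : M ≠ ⊥) : h.ann M = ⊥ := by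
  refine (hsimple (h.ann M) ?_ ?_ ?_).resolve_right fun htop => hM0 ?_
  · intro n i hi
    refine h.mem_ann.2 fun m hm => ?_
    rw [h.sub_mul, h.add_mul, h.mem_ann.1 hi m hm, add_zero, sub_self]
  · intro i hi n
    refine h.mem_ann.2 fun m hm => ?_
    rw [h.mul_assoc, h.mem_ann.1 hi _ (hM n m hm)]
  · intro n m i hi
    refine h.mem_ann.2 fun x hx => ?_
    rw [h.sub_mul, h.mul_assoc, h.mul_assoc, h.add_mul, h.mem_ann.1 hi x hx, add_zero, sub_self]
  · have hone : (1 : N) ∈ h.ann M := htop ▸ AddSubgroup.mem_top 1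
    refine (AddSubgroup.eq_bot_iff_forall M).2 fun m hm => ?_
    rw [← h.one_mul m]
    exact h.mem_ann.1 hone m hm

end IsNearRing

theorem exists_isMinimalNSubgroup (hdcc : DCCN N) (hnt : (0 : N) ≠ 1) :
    ∃ M : AddSubgroup N, IsMinimalNSubgroup M := by
  have : Nontrivial N := ⟨⟨0, 1, hnt⟩⟩
  exact exists_minimal_of_dccn hdcc (fun _ hA => hA.1) ⟨⊤, fun _ _ _ => trivial, top_ne_bot⟩

namespace IsMinimalNSubgroup

variable {M : AddSubgroup N}

theorem le_ann_or_exists_mul_eq (hM : IsMinimalNSubgroup M) (h : IsNearRing N)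
    {A : AddSubgroup N} (hA : IsNSubgroup A) {c : N} (hc : c ∈ M) :
    A ≤ h.ann {c} ∨ ∀ m ∈ M, ∃ a ∈ A, a * c = m := by
  set K := A.map (h.mulRight c)
  have hK : IsNSubgroup K := by
    rintro n _ ⟨a, ha, rfl⟩
    exact ⟨n * a, hA n a ha, h.mul_assoc n a c⟩
  have hKM : K ≤ M := by
    rintro _ ⟨a, -, rfl⟩
    exact hM.prop.1 a c hc
  by_cases hK0 : K = ⊥
  · left
    intro a ha
    have hac : a * c ∈ K := ⟨a, ha, rfl⟩
    rw [hK0, AddSubgroup.mem_bot] at hac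
    exact h.mem_ann_singleton.2 hac
  · right
    intro m hm
    exact hM.2 ⟨hK, hK0⟩ hKM hm

theorem exists_mul_eq (hM : IsMinimalNSubgroup M) (h : IsNearRing N) {c : N} (hc : c ∈ M)
    (hc0 : c ≠ 0) : ∀ m ∈ M, ∃ n : N, n * c = m := by
  intro m hm
  rcases hM.le_ann_or_exists_mul_eq h (A := ⊤) (fun _ _ _ => trivial) hc with htop | hsurj
  · refine absurd ?_ hc0
    rw [← h.one_mul c]
    exact h.mem_ann_singleton.1 (htop (AddSubgroup.mem_top 1))
  · obtain ⟨n, -, hn⟩ := hsurj m hm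
    exact ⟨n, hn⟩

theorem ann_singleton_le_of_le (hM : IsMinimalNSubgroup M) (h : IsNearRing N) {b c : N}
    (hb : b ∈ M) (hc0 : c ≠ 0) (hbc : h.ann {b} ≤ h.ann {c}) : h.ann {c} ≤ h.ann {b} := by
  refine (hM.le_ann_or_exists_mul_eq h (h.isNSubgroup_ann {c}) hb).resolve_right fun hsurj => ?_
  obtain ⟨n, hn, hnb⟩ := hsurj b hb
  have hnc : n * c = 1 * c := h.mul_eq_mul_of_ann_le hbc (by rw [hnb, h.one_mul])
  rw [h.one_mul, h.mem_ann_singleton.1 hn] at hnc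
  exact hc0 hnc.symm

theorem isInvertible_of_ann_singleton_eq_bot (hM : IsMinimalNSubgroup M) (h : IsNearRing N)
    (hnt : (0 : N) ≠ 1) {a : N} (ha : a ∈ M) (hann : h.ann {a} = ⊥) :
    ∀ n : N, n ≠ 0 → IsInvertible n := by
  have hleft : ∀ n : N, n ≠ 0 → ∃ n' : N, n' * n = 1 := by
    intro n hn
    have hna : n * a ≠ 0 := fun h0 => hn <| by
      simpa [hann] using (h.mem_ann_singleton.2 h0 : n ∈ h.ann {a})
    obtain ⟨n', hn'⟩ := hM.exists_mul_eq h (hM.prop.1 n a ha) hna a ha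
    refine ⟨n', h.eq_of_ann_eq_bot hann fun x hx => ?_⟩
    rw [Set.mem_singleton_iff.1 hx, h.mul_assoc, hn', h.one_mul]
  intro n hn
  obtain ⟨n', hn'⟩ := hleft n hn
  obtain ⟨n'', hn''⟩ := hleft n' (by rintro rfl; exact hnt (by rw [← hn', h.zero_mul]))
  have hn''n : n'' = n := by
    rw [← h.mul_one n'', ← hn', ← h.mul_assoc, hn'', h.one_mul]
  exact ⟨n', hn''n ▸ hn'', hn'⟩

end IsMinimalNSubgroup

structure IsDenseBasis [DecidableEq N] (h : IsNearRing N) (M : AddSubgroup N) (s : Finset N) :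
    Prop where
  subset : (s : Set N) ⊆ M
  ann_eq_bot : h.ann s = ⊥
  exists_mem_ann_erase_mul_eq : ∀ x ∈ s, ∀ m ∈ M, ∃ w ∈ h.ann ↑(s.erase x), w * x = m

theorem exists_finset_ann_eq_bot (h : IsNearRing N) (hdcc : DCCN N) {M : AddSubgroup N}
    (hann : h.ann M = ⊥) : ∃ s : Finset N, (s : Set N) ⊆ M ∧ h.ann s = ⊥ := by
  classical
  obtain ⟨_, ⟨s, hsM, rfl⟩, hsmin⟩ := exists_minimal_of_dccn hdcc
    (P := fun A => ∃ s : Finset N, (s : Set N) ⊆ M ∧ A = h.ann s)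
    (by rintro _ ⟨s, -, rfl⟩; exact h.isNSubgroup_ann _) ⟨_, ∅, by simp, rfl⟩
  refine ⟨s, hsM, eq_bot_iff.2 fun n hn => hann ▸ h.mem_ann.2 fun m hm => ?_⟩
  have hle := hsmin ⟨insert m s, by simpa [Set.insert_subset_iff] using ⟨hm, hsM⟩, rfl⟩
    (h.ann_anti (by simp))
  exact h.mem_ann.1 (hle hn) m (by simp)

theorem exists_isDenseBasis [DecidableEq N] (h : IsNearRing N) (hdcc : DCCN N)
    {M : AddSubgroup N} (hM : IsMinimalNSubgroup M) (hann : h.ann M = ⊥) :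
    ∃ s : Finset N, IsDenseBasis h M s := by
  obtain ⟨s, hsmin⟩ := exists_minimal_of_wellFoundedLT
    (fun s : Finset N => (s : Set N) ⊆ M ∧ h.ann s = ⊥) (exists_finset_ann_eq_bot h hdcc hann)
  obtain ⟨hsM, hs⟩ := hsmin.prop
  refine ⟨s, hsM, hs, fun x hx => ?_⟩
  refine (hM.le_ann_or_exists_mul_eq h (h.isNSubgroup_ann _) (hsM hx)).resolve_left fun hle => ?_
  refine hsmin.not_prop_of_lt (Finset.erase_ssubset hx)
    ⟨(Finset.coe_subset.2 (s.erase_subset x)).trans hsM, eq_bot_iff.2 fun n hn => ?_⟩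
  refine hs ▸ h.mem_ann.2 fun y hy => ?_
  by_cases hyx : y = x
  · exact hyx ▸ h.mem_ann_singleton.1 (hle hn)
  · exact h.mem_ann.1 hn y (by simpa [hyx] using hy)

namespace IsDenseBasis

variable [DecidableEq N] {h : IsNearRing N} {M : AddSubgroup N} {s : Finset N}

theorem ne_zero (hs : IsDenseBasis h M s) (hM : M ≠ ⊥) {x : N} (hx : x ∈ s) : x ≠ 0 := by
  rintro rfl
  refine hM ((AddSubgroup.eq_bot_iff_forall M).2 fun m hm => ?_)
  obtain ⟨w, -, hw⟩ := hs.exists_mem_ann_erase_mul_eq 0 hx m hm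
  rw [← hw, h.mul_zero]

theorem nonempty (hs : IsDenseBasis h M s) (hM : M ≠ ⊥) : s.Nonempty := by
  rw [Finset.nonempty_iff_ne_empty]
  rintro rfl
  refine hM ((AddSubgroup.eq_bot_iff_forall M).2 fun m _ => ?_)
  have h10 : (1 : N) = 0 := h.eq_of_ann_eq_bot hs.ann_eq_bot (by simp)
  rw [← h.one_mul m, h10, h.zero_mul]

theorem exists_mem_iSup_mul_eq (hs : IsDenseBasis h M s) {T : Finset N} (hT : T ⊆ s)
    (t : N → N) (ht : ∀ x ∈ T, t x ∈ M) :
    ∃ n ∈ ⨆ x ∈ T, h.ann ↑(s.erase x), ∀ x ∈ T, n * x = t x := by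
  induction T using Finset.induction_on with
  | empty => exact ⟨0, zero_mem _, by simp⟩
  | insert a T haT ih =>
    obtain ⟨n, hn, hnT⟩ := ih ((Finset.subset_insert a T).trans hT)
      fun x hx => ht x (Finset.mem_insert_of_mem hx)
    have has : a ∈ s := hT (Finset.mem_insert_self a T)
    obtain ⟨w, hw, hwa⟩ :=
      hs.exists_mem_ann_erase_mul_eq a has (t a) (ht a (Finset.mem_insert_self a T))
    have hna : n * a = 0 := h.mem_ann.1 (h.iSup_ann_erase_le s T hn) a (by simp [has, haT])
    have hT_le : ⨆ x ∈ T, h.ann ↑(s.erase x) ≤ ⨆ x ∈ insert a T, h.ann ↑(s.erase x) :=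
      biSup_mono fun x hx => Finset.mem_insert_of_mem hx
    have ha_le : h.ann ↑(s.erase a) ≤ ⨆ x ∈ insert a T, h.ann ↑(s.erase x) :=
      le_iSup₂ (f := fun x (_ : x ∈ insert a T) => h.ann ↑(s.erase x)) a
        (Finset.mem_insert_self a T)
    refine ⟨n + w, add_mem (hT_le hn) (ha_le hw), fun x hx => ?_⟩
    rw [h.add_mul]
    rcases Finset.mem_insert.1 hx with rfl | hx
    · rw [hna, hwa, zero_add]
    · have hxa : x ≠ a := fun hxa => haT (hxa ▸ hx)
      have hxs : x ∈ s := hT (Finset.mem_insert_of_mem hx)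
      rw [hnT x hx, h.mem_ann.1 hw x (by simp [hxa, hxs]), add_zero]

theorem exists_mul_eq (hs : IsDenseBasis h M s) (t : N → N) (ht : ∀ x ∈ s, t x ∈ M) :
    ∃ n : N, ∀ x ∈ s, n * x = t x :=
  let ⟨n, _, hn⟩ := hs.exists_mem_iSup_mul_eq subset_rfl t ht
  ⟨n, hn⟩

theorem mul_add_of_ne (hs : IsDenseBasis h M s) (hM : IsNSubgroup M) {x y c : N} (hxy : x ≠ y)
    (hcx : ∀ m ∈ M, ∃ p ∈ h.ann ↑(s.erase x), p * c = m)
    (hcy : ∀ m ∈ M, ∃ q ∈ h.ann ↑(s.erase y), q * c = m) (a b d : N) :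
    a * (b + d) = a * b + a * d := by
  have hdistrib : ∀ n : N, ∀ m₁ ∈ M, ∀ m₂ ∈ M, n * (m₁ + m₂) = n * m₁ + n * m₂ := by
    intro n m₁ hm₁ m₂ hm₂
    obtain ⟨p, hp, rfl⟩ := hcx m₁ hm₁
    obtain ⟨q, hq, rfl⟩ := hcy m₂ hm₂
    have hpq : ∀ z ∈ s, p * z = 0 ∨ q * z = 0 := fun z hz => by
      by_cases hzx : z = x
      · exact Or.inr (h.mem_ann.1 hq z (by simp [hz, hzx ▸ hxy]))
      · exact Or.inl (h.mem_ann.1 hp z (by simp [hz, hzx]))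
    rw [← h.add_mul, ← h.mul_assoc, h.mul_add_of_disjoint hs.ann_eq_bot hpq, h.add_mul, h.mul_assoc,
      h.mul_assoc]
  exact h.eq_of_ann_eq_bot hs.ann_eq_bot fun z hz => by
    rw [h.mul_assoc, h.add_mul, hdistrib a _ (hM b z (hs.subset hz)) _ (hM d z (hs.subset hz)),
      h.add_mul, h.mul_assoc, h.mul_assoc]

theorem exists_ann_le (hs : IsDenseBasis h M s) (hM : IsMinimalNSubgroup M)
    (hnld : ∃ a b d : N, a * (b + d) ≠ a * b + a * d) {c : N} (hc : c ∈ M) :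
    ∃ b ∈ s, h.ann {b} ≤ h.ann {c} := by
  obtain ⟨b, hb, hother⟩ : ∃ b ∈ s, ∀ y ∈ s, y ≠ b → h.ann ↑(s.erase y) ≤ h.ann {c} := by
    by_contra! hcon
    obtain ⟨x₀, hx₀⟩ := hs.nonempty hM.prop.2
    obtain ⟨x, hx, -, hxc⟩ := hcon x₀ hx₀
    obtain ⟨y, -, hyx, hyc⟩ := hcon x hx
    obtain ⟨a, b, d, hne⟩ := hnld
    refine hne (hs.mul_add_of_ne hM.prop.1 (c := c) hyx.symm ?_ ?_ a b d)
    · exact (hM.le_ann_or_exists_mul_eq h (h.isNSubgroup_ann _) hc).resolve_left hxc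
    · exact (hM.le_ann_or_exists_mul_eq h (h.isNSubgroup_ann _) hc).resolve_left hyc
  refine ⟨b, hb, fun n hn => ?_⟩
  obtain ⟨n', hn', hnn'⟩ := hs.exists_mem_iSup_mul_eq (s.erase_subset b) (n * ·)
    fun x hx => hM.prop.1 n x (hs.subset (Finset.mem_of_mem_erase hx))
  have hn'n : n' = n := h.eq_of_ann_eq_bot hs.ann_eq_bot fun x hx => by
    by_cases hxb : x = b
    · subst hxb
      rw [h.mem_ann.1 (h.iSup_ann_erase_le s _ hn') x (by simp [hx]),
        h.mem_ann_singleton.1 hn]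
    · exact hnn' x (Finset.mem_erase.2 ⟨hxb, hx⟩)
  exact hn'n ▸ iSup₂_le (fun y hy => hother y (Finset.mem_of_mem_erase hy)
    (Finset.ne_of_mem_erase hy)) hn'

theorem exists_isInvertible_mul_eq (hs : IsDenseBasis h M s) (hM : IsMinimalNSubgroup M)
    {b c : N} (hb : b ∈ s) (hc : c ∈ M) (hc0 : c ≠ 0) (hbc : h.ann {b} ≤ h.ann {c}) :
    ∃ u : N, IsInvertible u ∧ u * b = c ∧ ∀ z ∈ s, z ≠ b → u * z = z := by
  have hcb : h.ann {c} ≤ h.ann {b} := hM.ann_singleton_le_of_le h (hs.subset hb) hc0 hbc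
  obtain ⟨n₁, hn₁⟩ := hM.exists_mul_eq h hc hc0 b (hs.subset hb)
  obtain ⟨u, hu⟩ := hs.exists_mul_eq (fun z => if z = b then c else z) fun z hz => by
    split_ifs
    exacts [hc, hs.subset hz]
  obtain ⟨v, hv⟩ := hs.exists_mul_eq (fun z => if z = b then n₁ * b else z) fun z hz => by
    split_ifs
    exacts [hM.prop.1 n₁ b (hs.subset hb), hs.subset hz]
  have hub : u * b = c := by simpa using hu b hb
  have hvb : v * b = n₁ * b := by simpa using hv b hb
  have hfix : ∀ z ∈ s, z ≠ b → u * z = z ∧ v * z = z := fun z hz hzb =>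
    ⟨by simpa [hzb] using hu z hz, by simpa [hzb] using hv z hz⟩
  refine ⟨u, ⟨v, ?_, ?_⟩, hub, fun z hz hzb => (hfix z hz hzb).1⟩
  · refine h.eq_of_ann_eq_bot hs.ann_eq_bot fun z hz => ?_
    rw [h.mul_assoc, h.one_mul]
    by_cases hzb : z = b
    · subst hzb
      have hun₁ : u * n₁ * c = 1 * c := by rw [h.mul_assoc, hn₁, hub, h.one_mul]
      rw [hvb, ← h.mul_assoc, h.mul_eq_mul_of_ann_le hcb hun₁, h.one_mul]
    · rw [(hfix z hz hzb).2, (hfix z hz hzb).1]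
  · refine h.eq_of_ann_eq_bot hs.ann_eq_bot fun z hz => ?_
    rw [h.mul_assoc, h.one_mul]
    by_cases hzb : z = b
    · subst hzb
      rw [hub, h.mul_eq_mul_of_ann_le hbc hvb, hn₁]
    · rw [(hfix z hz hzb).1, (hfix z hz hzb).2]

theorem mem_of_ne_zero (hs : IsDenseBasis h M s) (hM : IsMinimalNSubgroup M) (ha : IsANearRing N)
    (hnld : ∃ a b d : N, a * (b + d) ≠ a * b + a * d) (hcard : 1 < s.card) {c : N} (hc : c ∈ M)
    (hc0 : c ≠ 0) : c ∈ s := by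
  obtain ⟨b, hb, hbc⟩ := hs.exists_ann_le hM hnld hc
  obtain ⟨u, hu, hub, hfix⟩ := hs.exists_isInvertible_mul_eq hM hb hc hc0 hbc
  obtain ⟨y, hy, hyb⟩ := Finset.exists_mem_ne hcard b
  have hu1 : u = 1 :=
    h.eq_one_of_isInvertible_of_mul_eq_self ha hu (hfix y hy hyb) (hs.ne_zero hM.prop.2 hy)
  rwa [← hub, hu1, h.one_mul]

theorem card_le_two (hs : IsDenseBasis h M s) (hM : M ≠ ⊥) (ha : IsANearRing N) :
    s.card ≤ 2 := by
  by_contra! h3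
  obtain ⟨x, hx, y, hy, z, hz, hxy, hxz, hyz⟩ := Finset.two_lt_card.1 h3
  have hswap : ∀ w ∈ s, Equiv.swap x y w ∈ s := fun w hw => by
    rw [Equiv.swap_apply_def]
    split_ifs <;> assumption
  obtain ⟨u, hu⟩ := hs.exists_mul_eq (Equiv.swap x y) fun w hw => hs.subset (hswap w hw)
  have huu : u * u = 1 := h.eq_of_ann_eq_bot hs.ann_eq_bot fun w hw => by
    rw [h.mul_assoc, hu w hw, hu _ (hswap w hw), Equiv.swap_apply_self, h.one_mul]
  have hu1 : u = 1 := h.eq_one_of_isInvertible_of_mul_eq_self ha ⟨u, huu, huu⟩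
    ((hu z hz).trans (Equiv.swap_apply_of_ne_of_ne hxz.symm hyz.symm)) (hs.ne_zero hM hz)
  apply hxy
  rw [← h.one_mul x, ← hu1, hu x hx, Equiv.swap_apply_left]

theorem card_eq_three (hs : IsDenseBasis h M s) (hM : IsMinimalNSubgroup M) (ha : IsANearRing N)
    (hnld : ∃ a b d : N, a * (b + d) ≠ a * b + a * d) (hcard : 1 < s.card) :
    Nat.card M = 3 := by
  have hMs : (M : Set N) = ↑(insert 0 s) := by
    ext m
    simp only [SetLike.mem_coe, Finset.coe_insert, Set.mem_insert_iff]
    refine ⟨fun hm => or_iff_not_imp_left.2 (hs.mem_of_ne_zero hM ha hnld hcard hm), ?_⟩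
    rintro (rfl | hm)
    exacts [M.zero_mem, hs.subset hm]
  rw [← SetLike.coe_sort_coe, hMs, Nat.card_coe_set_eq, Set.ncard_coe_finset,
    Finset.card_insert_of_notMem fun h0 => hs.ne_zero hM.prop.2 h0 rfl]
  have := hs.card_le_two hM.prop.2 ha
  omega

theorem isInvertible_of_card_le_one (hs : IsDenseBasis h M s) (hM : IsMinimalNSubgroup M)
    (hnt : (0 : N) ≠ 1) (hcard : s.card ≤ 1) : ∀ n : N, n ≠ 0 → IsInvertible n := by
  obtain ⟨a, ha⟩ := hs.nonempty hM.prop.2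
  refine hM.isInvertible_of_ann_singleton_eq_bot h hnt (hs.subset ha) ?_
  rw [eq_bot_iff, ← hs.ann_eq_bot]
  exact h.ann_anti fun x hx => Finset.card_le_one.1 hcard x hx a ha

end IsDenseBasis

theorem exists_injective_zeroPreserving {G : Type*} [AddGroup G] (h : IsNearRing N)
    {M : AddSubgroup N} (hM : IsNSubgroup M) (hann : h.ann M = ⊥) (e : M ≃+ G)
    (hdense : ∀ t : N → N, (∀ m ∈ M, t m ∈ M) → ∃ n : N, ∀ m ∈ M, m ≠ 0 → n * m = t m) :
    ∃ φ : N → (G → G), Function.Injective φ ∧ Set.range φ = {f : G → G | f 0 = 0} ∧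
      (∀ a b : N, φ (a + b) = φ a + φ b) ∧ (∀ a b : N, φ (a * b) = φ a ∘ φ b) := by
  classical
  let φ : N → G → G := fun n g => e ⟨n * e.symm g, hM n _ (e.symm g).2⟩
  refine ⟨φ, fun a b hab => h.eq_of_ann_eq_bot hann fun m hm => ?_, ?_, fun a b => ?_,
    fun a b => ?_⟩
  · simpa [φ] using congrFun hab (e ⟨m, hm⟩)
  · ext f
    constructor
    · rintro ⟨n, rfl⟩
      simp [φ, h.mul_zero]
    · intro (hf : f 0 = 0)
      obtain ⟨n, hn⟩ := hdense (fun x => if hx : x ∈ M then e.symm (f (e ⟨x, hx⟩)) else 0)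
        fun m hm => by simp [hm]
      refine ⟨n, funext fun g => ?_⟩
      by_cases hg : g = 0
      · simp [φ, hg, hf, h.mul_zero]
      · simp [φ, hn _ (e.symm g).2 (by simpa using hg)]
  · funext g
    simp only [φ, h.add_mul, Pi.add_apply, ← map_add]
    rfl
  · funext g
    simp [φ, h.mul_assoc]

theorem IsDenseBasis.exists_injective_zmod_three [DecidableEq N] {h : IsNearRing N}
    {M : AddSubgroup N} {s : Finset N} (hs : IsDenseBasis h M s) (hM : IsMinimalNSubgroup M)
    (ha : IsANearRing N) (hnld : ∃ a b d : N, a * (b + d) ≠ a * b + a * d) (hcard : 1 < s.card) :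
    ∃ φ : N → (ZMod 3 → ZMod 3), Function.Injective φ ∧
      Set.range φ = {f : ZMod 3 → ZMod 3 | f 0 = 0} ∧
      (∀ a b : N, φ (a + b) = φ a + φ b) ∧ (∀ a b : N, φ (a * b) = φ a ∘ φ b) := by
  have hann : h.ann M = ⊥ := eq_bot_iff.2 ((h.ann_anti hs.subset).trans hs.ann_eq_bot.le)
  refine exists_injective_zeroPreserving h hM.prop.1 hann
    (addEquivOfPrimeCardEq (hs.card_eq_three hM ha hnld hcard) (Nat.card_zmod 3)) fun t ht => ?_
  obtain ⟨n, hn⟩ := hs.exists_mul_eq t fun x hx => ht x (hs.subset hx)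
  exact ⟨n, fun m hm hm0 => hn m (hs.mem_of_ne_zero hM ha hnld hcard hm hm0)⟩

end

/-- A simple a-near-ring with DCCN which is not left distributive
is a near-field or isomorphic to `M₀(ℤ₃)`, the near-ring of zero-preserving
self-maps of `ℤ₃` under pointwise addition and composition. -/
theorem stmt14 {N : Type*} [AddGroup N] [Mul N] [One N]
    (hassoc : ∀ a b c : N, (a * b) * c = a * (b * c))
    (hdist : ∀ a b c : N, (a + b) * c = a * c + b * c)
    (honel : ∀ a : N, 1 * a = a) (honer : ∀ a : N, a * 1 = a)
    (hzero : ∀ a : N, a * 0 = 0)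
    (ha : ∀ a b : N, (∃ v : N, a * v = 1 ∧ v * a = 1) →
      (∃ v : N, b * v = 1 ∧ v * b = 1) → a ≠ b →
      ∃ v : N, (a - b) * v = 1 ∧ v * (a - b) = 1)
    (hnt : (0 : N) ≠ 1)
    (hdcc : ∀ f : ℕ → AddSubgroup N, Antitone f →
      (∀ i : ℕ, ∀ n : N, ∀ m ∈ f i, n * m ∈ f i) →
      ∃ k : ℕ, ∀ j ≥ k, f j = f k)
    (hsimple : ∀ I : AddSubgroup N,
      (∀ n : N, ∀ i ∈ I, n + i - n ∈ I) →
      (∀ i ∈ I, ∀ n : N, i * n ∈ I) →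
      (∀ n m : N, ∀ i ∈ I, n * (m + i) - n * m ∈ I) →
      I = ⊥ ∨ I = ⊤)
    (hnld : ∃ a b c : N, a * (b + c) ≠ a * b + a * c) :
    (∀ x : N, x ≠ 0 → ∃ y : N, x * y = 1 ∧ y * x = 1) ∨
    (∃ φ : N → (ZMod 3 → ZMod 3),
      Function.Injective φ ∧
      Set.range φ = {f : ZMod 3 → ZMod 3 | f 0 = 0} ∧
      (∀ a b : N, φ (a + b) = φ a + φ b) ∧
      (∀ a b : N, φ (a * b) = φ a ∘ φ b)) := by
  classical
  have h : IsNearRing N := ⟨hassoc, hdist, honel, honer, hzero⟩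
  obtain ⟨M, hM⟩ := exists_isMinimalNSubgroup hdcc hnt
  have hann : h.ann M = ⊥ := h.ann_eq_bot_of_simple hsimple hM.prop.1 hM.prop.2
  obtain ⟨s, hs⟩ := exists_isDenseBasis h hdcc hM hann
  rcases le_or_gt s.card 1 with hcard | hcard
  · exact Or.inl (hs.isInvertible_of_card_le_one hM hnt hcard)
  · exact Or.inr (hs.exists_injective_zmod_three hM ha hnld hcard)
end

section
/- Let N be a finite f-near-ring. Then the number of units of N divides Nat.card N − 1. -/
set_option maxHeartbeats 1600000 in
/-- In a finite f-near-ring, the number of units divides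
`Nat.card N - 1`. -/
theorem stmt16 {N : Type*} [AddGroup N] [Mul N] [One N] [Finite N]
    (hassoc : ∀ a b c : N, (a * b) * c = a * (b * c))
    (hdist : ∀ a b c : N, (a + b) * c = a * c + b * c)
    (honel : ∀ a : N, 1 * a = a) (honer : ∀ a : N, a * 1 = a)
    (hzero : ∀ a : N, a * 0 = 0)
    (hf : ∀ u : N, (∃ v : N, u * v = 1 ∧ v * u = 1) → u ≠ 1 →
      ∀ n : N, n * u = n → n = 0) :
    Nat.card {u : N // ∃ v : N, u * v = 1 ∧ v * u = 1} ∣ Nat.card N - 1 := by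
  classical
  have hzerol : ∀ a : N, (0 : N) * a = 0 := by
    intro a
    have h := hdist 0 0 a
    rw [add_zero] at h
    exact (add_eq_left.mp h.symm)
  set U := {u : N // ∃ v : N, u * v = 1 ∧ v * u = 1} with hUdef
  letI : One U := ⟨⟨1, 1, honel 1, honel 1⟩⟩
  letI : Mul U := ⟨fun a b => ⟨b.1 * a.1,
    a.2.choose * b.2.choose, by
      constructor
      · rw [hassoc, ← hassoc a.1, a.2.choose_spec.1, honel, b.2.choose_spec.1]
      · rw [hassoc, ← hassoc b.2.choose, b.2.choose_spec.2, honel, a.2.choose_spec.2]⟩⟩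
  letI : Inv U := ⟨fun a => ⟨a.2.choose, a.1, a.2.choose_spec.2, a.2.choose_spec.1⟩⟩
  have hmul : ∀ a b : U, (a * b).1 = b.1 * a.1 := fun _ _ => rfl
  have hone : (1 : U).1 = 1 := rfl
  have hinv : ∀ a : U, (a⁻¹).1 = a.2.choose := fun _ => rfl
  letI : Group U := Group.ofLeftAxioms
    (fun a b c => Subtype.ext (by rw [hmul, hmul, hmul, hmul, hassoc]))
    (fun a => Subtype.ext (by rw [hmul, hone, honer]))
    (fun a => Subtype.ext (by rw [hmul, hinv, hone, a.2.choose_spec.1]))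
  set X := {n : N // n ≠ 0} with hXdef
  have hsmul_ne : ∀ (g : U) (x : X), x.1 * g.1 ≠ 0 := by
    intro g x h
    apply x.2
    have : x.1 * 1 = 0 := by
      rw [← g.2.choose_spec.1, ← hassoc, h, hzerol]
    rwa [honer] at this
  letI : MulAction U X :=
    { smul := fun g x => ⟨x.1 * g.1, hsmul_ne g x⟩
      one_smul := fun x => Subtype.ext (by show x.1 * 1 = x.1; exact honer x.1)
      mul_smul := fun g h x => Subtype.ext (by
        show x.1 * (h.1 * g.1) = (x.1 * h.1) * g.1
        rw [hassoc]) }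
  have hsmul : ∀ (g : U) (x : X), (g • x).1 = x.1 * g.1 := fun _ _ => rfl
  -- stabilizers are trivial
  have hstab : ∀ x : X, MulAction.stabilizer U x = ⊥ := by
    intro x
    rw [eq_bot_iff]
    intro g hg
    rw [MulAction.mem_stabilizer_iff] at hg
    have hgx : x.1 * g.1 = x.1 := congrArg Subtype.val hg
    rw [Subgroup.mem_bot]
    by_contra hg1
    have : g.1 ≠ 1 := fun h => hg1 (Subtype.ext (h.trans hone.symm))
    exact x.2 (hf g.1 g.2 this x.1 hgx)
  have e1 : X ≃ Σ ω : Quotient (MulAction.orbitRel U X), U ⧸ MulAction.stabilizer U ω.out :=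
    MulAction.selfEquivSigmaOrbitsQuotientStabilizer U X
  have e3 : (U ⧸ (⊥ : Subgroup U)) ≃ U := QuotientGroup.quotientBot.toEquiv
  have e4 : (Σ ω : Quotient (MulAction.orbitRel U X), U ⧸ MulAction.stabilizer U ω.out) ≃
      (Σ _ω : Quotient (MulAction.orbitRel U X), U) :=
    Equiv.sigmaCongrRight fun ω => (Subgroup.quotientEquivOfEq (hstab ω.out)).trans e3
  have e5 : (Σ _ω : Quotient (MulAction.orbitRel U X), U) ≃
      (Quotient (MulAction.orbitRel U X)) × U := Equiv.sigmaEquivProd _ U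
  have hcardX2 : Nat.card X = Nat.card (Quotient <| MulAction.orbitRel U X) * Nat.card U := by
    rw [Nat.card_congr ((e1.trans e4).trans e5), Nat.card_prod]
  have hX1 : Nat.card X = Nat.card N - 1 := by
    letI := Fintype.ofFinite N
    have h0 : Fintype.card {n : N // n = 0} = 1 := Fintype.card_subtype_eq (0 : N)
    have hc := Fintype.card_subtype_compl (fun n : N => n = 0)
    rw [h0] at hc
    rw [Nat.card_eq_fintype_card, Nat.card_eq_fintype_card]
    convert hc using 2
  rw [← hX1, hcardX2]
  exact dvd_mul_left _ _
end

section
/- Let N be a finite f-near-ring and let I be an ideal of N. Then the number of units of N divides Nat.card I − 1. -/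
/-- In a finite f-near-ring, the number of units divides
`Nat.card I - 1` for every ideal `I`. -/
theorem stmt17 {N : Type*} [AddGroup N] [Mul N] [One N] [Finite N]
    (hassoc : ∀ a b c : N, (a * b) * c = a * (b * c))
    (hdist : ∀ a b c : N, (a + b) * c = a * c + b * c)
    (honel : ∀ a : N, 1 * a = a) (honer : ∀ a : N, a * 1 = a)
    (hzero : ∀ a : N, a * 0 = 0)
    (hf : ∀ u : N, (∃ v : N, u * v = 1 ∧ v * u = 1) → u ≠ 1 →
      ∀ n : N, n * u = n → n = 0)
    (I : AddSubgroup N)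
    (hnormal : ∀ n : N, ∀ i ∈ I, n + i - n ∈ I)
    (hright : ∀ i ∈ I, ∀ n : N, i * n ∈ I)
    (hleft : ∀ n m : N, ∀ i ∈ I, n * (m + i) - n * m ∈ I) :
    Nat.card {u : N // ∃ v : N, u * v = 1 ∧ v * u = 1} ∣ Nat.card I - 1 := by
  classical
  have hzerol : ∀ a : N, 0 * a = 0 := by
    intro a
    have h : (0 : N) * a = 0 * a + 0 * a := by
      rw [← hdist, add_zero]
    have h2 : (0 : N) * a + 0 = 0 * a + 0 * a := by rw [add_zero]; exact h
    exact (add_left_cancel h2).symm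
  -- the group of units, with opposite multiplication so that right
  -- translation becomes a left action
  set U := {u : N // ∃ v : N, u * v = 1 ∧ v * u = 1} with hU
  set X := {i : N // i ∈ I ∧ i ≠ 0} with hX
  letI : Group U :=
    { mul := fun u v => ⟨v.1 * u.1, by
        obtain ⟨u, a, ha1, ha2⟩ := u
        obtain ⟨v, b, hb1, hb2⟩ := v
        refine ⟨a * b, ?_, ?_⟩
        · rw [hassoc, ← hassoc u a b, ha1, honel, hb1]
        · rw [hassoc, ← hassoc b v u, hb2, honel, ha2]⟩
      one := ⟨1, 1, honel 1, honel 1⟩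
      inv := fun u => ⟨Classical.choose u.2, u.1,
        (Classical.choose_spec u.2).2, (Classical.choose_spec u.2).1⟩
      mul_assoc := fun a b c => Subtype.ext (hassoc c.1 b.1 a.1).symm
      one_mul := fun a => Subtype.ext (honer a.1)
      mul_one := fun a => Subtype.ext (honel a.1)
      inv_mul_cancel := fun a => Subtype.ext (Classical.choose_spec a.2).1 }
  -- the action of units on the nonzero elements of I by right translation
  letI : MulAction U X :=
    { smul := fun u i => ⟨i.1 * u.1, hright i.1 i.2.1 u.1, by
        intro h0
        apply i.2.2
        obtain ⟨v, hv1, hv2⟩ := u.2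
        have : i.1 = i.1 * u.1 * v := by rw [hassoc, hv1, honer]
        rw [this, h0, hzerol]⟩
      one_smul := fun i => Subtype.ext (honer i.1)
      mul_smul := fun u v i => Subtype.ext (hassoc i.1 v.1 u.1).symm }
  -- the action is free
  have hstab : ∀ x : X, MulAction.stabilizer U x = ⊥ := by
    intro x
    ext u
    simp only [Subgroup.mem_bot, MulAction.mem_stabilizer_iff]
    constructor
    · intro hu
      have hval : x.1 * u.1 = x.1 := congrArg Subtype.val hu
      by_contra hne
      have hune : u.1 ≠ 1 := fun h => hne (Subtype.ext h)
      exact x.2.2 (hf u.1 u.2 hune x.1 hval)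
    · rintro rfl
      exact Subtype.ext (honer x.1)
  -- orbit counting: |X| = (number of orbits) * |U|
  haveI : Fintype X := Fintype.ofFinite X
  haveI : Fintype U := Fintype.ofFinite U
  have key : Nat.card U ∣ Nat.card X := by
    have e := MulAction.selfEquivSigmaOrbitsQuotientStabilizer U X
    have hcard : Nat.card X =
        Nat.card (MulAction.orbitRel.Quotient U X) * Nat.card U := by
      rw [Nat.card_congr e]
      haveI : Fintype (MulAction.orbitRel.Quotient U X) := Fintype.ofFinite _
      rw [Nat.card_eq_fintype_card, Fintype.card_sigma]
      have : ∀ ω : MulAction.orbitRel.Quotient U X,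
          Fintype.card (U ⧸ MulAction.stabilizer U ω.out) = Nat.card U := by
        intro ω
        rw [← Nat.card_eq_fintype_card, hstab,
          Nat.card_congr (QuotientGroup.quotientBot (G := U)).toEquiv]
      simp only [this, Finset.sum_const, Finset.card_univ, smul_eq_mul,
        Nat.card_eq_fintype_card]
    exact ⟨_, by rw [hcard, mul_comm]⟩
  -- |X| = |I| - 1
  have hXcard : Nat.card X = Nat.card I - 1 := by
    haveI : Fintype I := Fintype.ofFinite I
    have e : X ≃ {i : I // i.1 ≠ 0} :=
      { toFun := fun x => ⟨⟨x.1, x.2.1⟩, x.2.2⟩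
        invFun := fun x => ⟨x.1.1, x.1.2, x.2⟩
        left_inv := fun x => rfl
        right_inv := fun x => rfl }
    rw [Nat.card_congr e]
    haveI : Fintype {i : I // i.1 ≠ 0} := Fintype.ofFinite _
    rw [Nat.card_eq_fintype_card, Nat.card_eq_fintype_card]
    have h1 : Fintype.card {i : I // i.1 = 0} = 1 := by
      rw [Fintype.card_eq_one_iff]
      refine ⟨⟨⟨0, I.zero_mem⟩, rfl⟩, ?_⟩
      rintro ⟨⟨i, hi⟩, h⟩
      exact Subtype.ext (Subtype.ext h)
    calc Fintype.card {i : I // i.1 ≠ 0}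
        = Fintype.card I - Fintype.card {i : I // i.1 = 0} :=
          Fintype.card_subtype_compl _
      _ = Fintype.card I - 1 := by rw [h1]
  rw [← hXcard]
  exact key
end
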